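/- arXiv:1708.09430 — 6 statements merged into one kernel-verified Lean document; each statement's English description precedes it below -/
import Mathlib

section
/- The function f(u,v) = (u+v)/(e^{u+v}-1) + (u-v)/(e^{u-v}-1) - 2u/(e^u-1), with removable singularities filled in by limits, satisfies 0 ≤ f(u,v) ≤ f(0,v) for all real u, v. -/
/-- The function `x / (e^x - 1)` with the removable singularity at `x = 0`
filled in by its limit `1`. -/
noncomputable def planckKernel (x : ℝ) : ℝ :=
  if x = 0 then 1 else x / (Real.exp x - 1)

/-- `f_s(u,v) = (u+v)/(e^{u+v}-1) + (u-v)/(e^{u-v}-1) - 2u/(e^u-1)`,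
with removable singularities filled in by limits. -/
noncomputable def fs (u v : ℝ) : ℝ :=
  planckKernel (u + v) + planckKernel (u - v) - 2 * planckKernel u

open Real Set Filter Topology

lemma exp_sub_one_ne {x : ℝ} (hx : x ≠ 0) : Real.exp x - 1 ≠ 0 := by
  rcases lt_or_gt_of_ne hx with h | h
  · have := Real.exp_lt_one_iff.mpr h
    linarith
  · have := Real.one_lt_exp_iff.mpr h
    linarith

noncomputable def E (x : ℝ) : ℝ := planckKernel x + x / 2

noncomputable def D (x : ℝ) : ℝ :=
  if x = 0 then 0 else ((Real.exp x)^2 - 2*x*Real.exp x - 1) / (2*(Real.exp x - 1)^2)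

noncomputable def D2 (x : ℝ) : ℝ :=
  Real.exp x * (x*(Real.exp x + 1) - 2*(Real.exp x - 1)) / (Real.exp x - 1)^3

noncomputable def D3 (x : ℝ) : ℝ :=
  Real.exp x * (3*((Real.exp x)^2 - 1) - x*((Real.exp x)^2 + 4*Real.exp x + 1)) / (Real.exp x - 1)^4

/-- helper: nonneg on Ici 0 from derivative -/
lemma nonneg_of_deriv {f f' : ℝ → ℝ} (hd : ∀ x, HasDerivAt f (f' x) x) (h0 : f 0 = 0)
    (h' : ∀ x, 0 ≤ x → 0 ≤ f' x) : ∀ x, 0 ≤ x → 0 ≤ f x := by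
  intro x hx
  have hmono : MonotoneOn f (Ici (0:ℝ)) := by
    apply monotoneOn_of_hasDerivWithinAt_nonneg (convex_Ici 0)
      (fun y _ => (hd y).continuousAt.continuousWithinAt)
      (fun y hy => (hd y).hasDerivWithinAt)
    intro y hy
    rw [interior_Ici] at hy
    exact h' y (le_of_lt hy)
  have := hmono (self_mem_Ici) (mem_Ici.mpr hx) hx
  rwa [h0] at this

lemma P1_nonneg : ∀ x : ℝ, 0 ≤ x → 0 ≤ x * Real.exp x - Real.exp x + 1 := by
  apply nonneg_of_deriv (f' := fun x => x * Real.exp x)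
  · intro x
    have h := ((hasDerivAt_id x).mul (Real.hasDerivAt_exp x)).sub (Real.hasDerivAt_exp x)
    have h2 := h.add_const 1
    refine h2.congr_deriv (Eq.symm ?_)
    simp only [id_eq]
    ring
  · simp
  · intro x hx
    positivity

lemma P_nonneg : ∀ x : ℝ, 0 ≤ x → 0 ≤ x * Real.exp x + x - 2 * Real.exp x + 2 := by
  apply nonneg_of_deriv (f' := fun x => x * Real.exp x - Real.exp x + 1)
  · intro x
    have h := (((hasDerivAt_id x).mul (Real.hasDerivAt_exp x)).add (hasDerivAt_id x)).sub
      ((Real.hasDerivAt_exp x).const_mul 2)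
    have h2 := h.add_const 2
    refine h2.congr_deriv (Eq.symm ?_)
    simp only [id_eq]
    ring
  · simp
  · exact P1_nonneg

lemma R_nonneg : ∀ x : ℝ, 0 ≤ x → 0 ≤ (Real.exp x)^2 - 2*x*Real.exp x - 1 := by
  apply nonneg_of_deriv (f' := fun x => 2*(Real.exp x)^2 - 2*Real.exp x - 2*x*Real.exp x)
  · intro x
    have h := (((Real.hasDerivAt_exp x).fun_pow 2).sub
      (((hasDerivAt_id x).const_mul 2).mul (Real.hasDerivAt_exp x))).sub_const 1
    refine h.congr_deriv (Eq.symm ?_)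
    simp only [id_eq]
    ring
  · simp
  · intro x hx
    have h1 := Real.add_one_le_exp x
    have h2 := Real.exp_pos x
    nlinarith

lemma Q1_nonneg : ∀ x : ℝ, 0 ≤ x →
    0 ≤ 2*x*(Real.exp x)^2 + 4*x*Real.exp x - 5*(Real.exp x)^2 + 4*Real.exp x + 1 := by
  apply nonneg_of_deriv
    (f' := fun x => 4*Real.exp x * (x * Real.exp x + x - 2 * Real.exp x + 2))
  · intro x
    have h := (((((hasDerivAt_id x).const_mul 2).mul ((Real.hasDerivAt_exp x).fun_pow 2)).add
      (((hasDerivAt_id x).const_mul 4).mul (Real.hasDerivAt_exp x))).sub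
      (((Real.hasDerivAt_exp x).fun_pow 2).const_mul 5)).add
      ((Real.hasDerivAt_exp x).const_mul 4)
    have h2 := h.add_const 1
    refine h2.congr_deriv (Eq.symm ?_)
    simp only [id_eq]
    ring
  · norm_num
  · intro x hx
    have := P_nonneg x hx
    have h2 := (Real.exp_pos x).le
    positivity

lemma Q_nonneg : ∀ x : ℝ, 0 ≤ x →
    0 ≤ x*(Real.exp x)^2 + 4*x*Real.exp x + x - 3*(Real.exp x)^2 + 3 := by
  apply nonneg_of_deriv
    (f' := fun x => 2*x*(Real.exp x)^2 + 4*x*Real.exp x - 5*(Real.exp x)^2 + 4*Real.exp x + 1)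
  · intro x
    have h := ((((hasDerivAt_id x).mul ((Real.hasDerivAt_exp x).fun_pow 2)).add
      (((hasDerivAt_id x).const_mul 4).mul (Real.hasDerivAt_exp x))).add (hasDerivAt_id x)).sub
      (((Real.hasDerivAt_exp x).fun_pow 2).const_mul 3)
    have h2 := h.add_const 3
    refine h2.congr_deriv (Eq.symm ?_)
    simp only [id_eq]
    ring
  · norm_num
  · exact Q1_nonneg

lemma pk_eventually {x : ℝ} (hx : x ≠ 0) :
    (fun y => y / (Real.exp y - 1)) =ᶠ[nhds x] planckKernel := by
  filter_upwards [eventually_ne_nhds hx] with y hy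
  simp [planckKernel, hy]

lemma hasDerivAt_E {x : ℝ} (hx : x ≠ 0) : HasDerivAt E (D x) x := by
  have hne := exp_sub_one_ne hx
  have h1 : HasDerivAt (fun y => y / (Real.exp y - 1))
      ((1 * (Real.exp x - 1) - x * Real.exp x) / (Real.exp x - 1)^2) x :=
    (hasDerivAt_id x).div ((Real.hasDerivAt_exp x).sub_const 1) hne
  have h2 : HasDerivAt planckKernel
      ((1 * (Real.exp x - 1) - x * Real.exp x) / (Real.exp x - 1)^2) x :=
    h1.congr_of_eventuallyEq (pk_eventually hx).symm
  have h3 := h2.add ((hasDerivAt_id x).div_const 2)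
  rw [show E = fun y => planckKernel y + id y / 2 from rfl]
  refine h3.congr_deriv (Eq.symm ?_)
  rw [D, if_neg hx]
  field_simp
  ring

lemma hasDerivAt_D {x : ℝ} (hx : x ≠ 0) : HasDerivAt D (D2 x) x := by
  have hne := exp_sub_one_ne hx
  have hnum : HasDerivAt (fun y => (Real.exp y)^2 - 2*y*Real.exp y - 1)
      (2 * Real.exp x * Real.exp x - (2*Real.exp x + 2*x*Real.exp x)) x := by
    have := (((Real.hasDerivAt_exp x).fun_pow 2).sub
      (((hasDerivAt_id x).const_mul 2).mul (Real.hasDerivAt_exp x))).sub_const 1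
    refine this.congr_deriv (Eq.symm ?_)
    simp only [id_eq]
    ring
  have hden : HasDerivAt (fun y => 2*(Real.exp y - 1)^2)
      (2*(2 * (Real.exp x - 1) * Real.exp x)) x := by
    have := (((Real.hasDerivAt_exp x).sub_const 1).fun_pow 2).const_mul 2
    refine this.congr_deriv (Eq.symm ?_)
    ring
  have h1 := hnum.div hden (by positivity)
  have heq : D =ᶠ[nhds x]
      (fun y => ((Real.exp y)^2 - 2*y*Real.exp y - 1) / (2*(Real.exp y - 1)^2)) := by
    filter_upwards [eventually_ne_nhds hx] with y hy
    simp [D, hy]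
  have h2 := h1.congr_of_eventuallyEq heq
  refine h2.congr_deriv (Eq.symm ?_)
  rw [D2]
  rw [div_eq_div_iff (by positivity) (by positivity)]
  ring

lemma hasDerivAt_D2 {x : ℝ} (hx : x ≠ 0) : HasDerivAt D2 (D3 x) x := by
  have hne := exp_sub_one_ne hx
  have hnum : HasDerivAt (fun y => Real.exp y * (y*(Real.exp y + 1) - 2*(Real.exp y - 1)))
      (Real.exp x * (x*(Real.exp x + 1) - 2*(Real.exp x - 1)) +
        Real.exp x * ((Real.exp x + 1) + x*Real.exp x - 2*Real.exp x)) x := by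
    have := (Real.hasDerivAt_exp x).fun_mul
      (((hasDerivAt_id x).fun_mul ((Real.hasDerivAt_exp x).add_const 1)).fun_sub
        (((Real.hasDerivAt_exp x).sub_const 1).const_mul 2))
    refine this.congr_deriv (Eq.symm ?_)
    simp only [id_eq]
    ring
  have hden : HasDerivAt (fun y => (Real.exp y - 1)^3)
      (3 * (Real.exp x - 1)^2 * Real.exp x) x := by
    have := ((Real.hasDerivAt_exp x).sub_const 1).fun_pow 3
    refine this.congr_deriv (Eq.symm ?_)
    norm_num
  have h1 := hnum.div hden (pow_ne_zero 3 hne)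
  have h2 : HasDerivAt D2 _ x := h1
  refine h2.congr_deriv (Eq.symm ?_)
  rw [D3]
  rw [div_eq_div_iff (pow_ne_zero 4 hne) (by positivity)]
  ring

lemma D_pos_form {x : ℝ} (hx : x ≠ 0) :
    D x = ((Real.exp x)^2 - 2*x*Real.exp x - 1) / (2*(Real.exp x - 1)^2) := by
  rw [D, if_neg hx]

lemma D_nonneg {x : ℝ} (hx : 0 ≤ x) : 0 ≤ D x := by
  rcases eq_or_lt_of_le hx with h | h
  · simp [D, ← h]
  · rw [D_pos_form (ne_of_gt h)]
    have := R_nonneg x hx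
    exact div_nonneg this (by positivity)

lemma D2_nonneg {x : ℝ} (hx : 0 < x) : 0 ≤ D2 x := by
  rw [D2]
  have h1 := P_nonneg x hx.le
  have h2 : 1 < Real.exp x := Real.one_lt_exp_iff.mpr hx
  have h3 : (0:ℝ) < (Real.exp x - 1)^3 := pow_pos (by linarith) 3
  apply div_nonneg _ h3.le
  have : 0 ≤ x*(Real.exp x + 1) - 2*(Real.exp x - 1) := by nlinarith
  exact mul_nonneg (Real.exp_pos x).le this

lemma D3_nonpos {x : ℝ} (hx : 0 < x) : D3 x ≤ 0 := by
  rw [D3]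
  have h1 := Q_nonneg x hx.le
  have h2 : 1 < Real.exp x := Real.one_lt_exp_iff.mpr hx
  have h4 : (0:ℝ) < (Real.exp x - 1)^4 := pow_pos (by linarith) 4
  apply div_nonpos_of_nonpos_of_nonneg _ h4.le
  have h5 : 3*((Real.exp x)^2 - 1) - x*((Real.exp x)^2 + 4*Real.exp x + 1) ≤ 0 := by nlinarith
  have h6 := (Real.exp_pos x).le
  exact mul_nonpos_of_nonneg_of_nonpos h6 h5

lemma E_even (x : ℝ) : E (-x) = E x := by
  rcases eq_or_ne x 0 with h | h
  · simp [h]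
  · have hne := exp_sub_one_ne h
    have hne' : Real.exp (-x) - 1 ≠ 0 := exp_sub_one_ne (neg_ne_zero.mpr h)
    rw [E, E, planckKernel, planckKernel, if_neg h, if_neg (neg_ne_zero.mpr h)]
    rw [Real.exp_neg] at hne' ⊢
    have hpos := Real.exp_pos x
    have hb : 1 - Real.exp x ≠ 0 := fun hc => hne (by linarith)
    field_simp
    ring

lemma D_neg (x : ℝ) : D (-x) = - D x := by
  rcases eq_or_ne x 0 with h | h
  · simp [h, D]
  · rw [D_pos_form (neg_ne_zero.mpr h), D_pos_form h]
    rw [Real.exp_neg]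
    have hne := exp_sub_one_ne h
    have hpos := Real.exp_pos x
    have hb : 1 - Real.exp x ≠ 0 := fun hc => hne (by linarith)
    have h1 : ((Real.exp x)⁻¹ - 1) ≠ 0 := by
      rw [← Real.exp_neg]; exact exp_sub_one_ne (neg_ne_zero.mpr h)
    have d1 : (0:ℝ) < ((Real.exp x)⁻¹ - 1)^2 := by
      rcases h1.lt_or_gt with hh | hh <;> nlinarith
    have d2 : (0:ℝ) < (Real.exp x - 1)^2 := by
      rcases hne.lt_or_gt with hh | hh <;> nlinarith
    rw [← neg_div, div_eq_div_iff (by linarith) (by linarith)]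
    field_simp
    ring

lemma continuousAt_E_zero : ContinuousAt E 0 := by
  have h := Real.hasDerivAt_exp 0
  rw [hasDerivAt_iff_tendsto_slope] at h
  have h2 : Tendsto (fun y => (slope Real.exp 0 y)⁻¹) (nhdsWithin 0 {(0:ℝ)}ᶜ) (nhds 1) := by
    simpa using h.inv₀ (by norm_num)
  have h3 : Tendsto planckKernel (nhdsWithin 0 {(0:ℝ)}ᶜ) (nhds 1) := by
    apply h2.congr'
    filter_upwards [self_mem_nhdsWithin] with y hy
    have hy' : y ≠ 0 := hy
    rw [slope_def_field]
    simp [planckKernel, hy', inv_div]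
  have h4 : Tendsto planckKernel (nhds 0) (nhds 1) := by
    rw [← nhdsNE_sup_pure 0, tendsto_sup]
    exact ⟨h3, by simpa [planckKernel] using tendsto_pure_nhds planckKernel 0⟩
  have : ContinuousAt planckKernel 0 := by
    rw [ContinuousAt]
    simpa [planckKernel] using h4
  exact this.add (by fun_prop)

lemma continuous_E : Continuous E := by
  rw [continuous_iff_continuousAt]
  intro x
  rcases eq_or_ne x 0 with h | h
  · rw [h]; exact continuousAt_E_zero
  · exact (hasDerivAt_E h).differentiableAt.continuousAt

lemma D_le_x {x : ℝ} (h0 : 0 < x) (h1 : x ≤ 1/2) : D x ≤ x := by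
  have hA := Real.exp_bound (x := x) (by rw [abs_of_pos h0]; linarith) (n := 3) (by norm_num)
  have hsum : ∑ i ∈ Finset.range 3, x^i/(Nat.factorial i) = 1 + x + x^2/2 := by
    simp [Finset.sum_range_succ, Nat.factorial]
  rw [hsum, abs_of_pos h0] at hA
  norm_num [Nat.factorial] at hA
  have habs := abs_le.mp hA
  rw [D_pos_form (ne_of_gt h0)]
  have hw : x ≤ Real.exp x - 1 := by linarith [Real.add_one_le_exp x]
  have hwpos : 0 < Real.exp x - 1 := by linarith
  have hd : 0 < 2*(Real.exp x - 1)^2 := by positivity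
  rw [div_le_iff₀ hd]
  have hid : (Real.exp x)^2 - 2*x*Real.exp x - 1 =
      x^4/4 + (Real.exp x - (1+x+x^2/2))*(2+x^2) + (Real.exp x - (1+x+x^2/2))^2 := by ring
  have b1 : (Real.exp x - (1+x+x^2/2))*(2+x^2) ≤ x^3*(2/9)*(2+x^2) :=
    mul_le_mul_of_nonneg_right habs.2 (by positivity)
  have b2 : (Real.exp x - (1+x+x^2/2))^2 ≤ (x^3*(2/9))^2 :=
    sq_le_sq' (by linarith [habs.1]) habs.2
  have k1 : (Real.exp x)^2 - 2*x*Real.exp x - 1 ≤ 2*x^3 := by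
    rw [hid]
    nlinarith [b1, b2, h0, h1, mul_pos h0 h0, mul_pos (mul_pos h0 h0) h0]
  have hsq : x^2 ≤ (Real.exp x - 1)^2 := by nlinarith [hw, h0]
  have hm := mul_le_mul_of_nonneg_left hsq (by linarith : (0:ℝ) ≤ 2*x)
  nlinarith [k1, hm]

lemma continuousOn_D : ContinuousOn D (Ici 0) := by
  intro x hx
  rcases eq_or_lt_of_le (mem_Ici.mp hx) with h | h
  · have htd : Tendsto D (nhdsWithin 0 (Ici 0)) (nhds 0) := by
      apply tendsto_of_tendsto_of_tendsto_of_le_of_le' tendsto_const_nhds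
        (tendsto_id.mono_left nhdsWithin_le_nhds)
      · filter_upwards [Icc_mem_nhdsGE_of_mem (by norm_num : (0:ℝ) ∈ Ico 0 (1/2))] with y hy
        exact D_nonneg hy.1
      · filter_upwards [Icc_mem_nhdsGE_of_mem (by norm_num : (0:ℝ) ∈ Ico 0 (1/2))] with y hy
        rcases eq_or_lt_of_le hy.1 with h' | h'
        · simp [D, ← h']
        · exact D_le_x h' hy.2
    rw [ContinuousWithinAt, ← h]
    simpa [D] using htd
  · exact ((hasDerivAt_D (ne_of_gt h)).continuousAt).continuousWithinAt

lemma E_mono : MonotoneOn E (Ici (0:ℝ)) := by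
  apply monotoneOn_of_hasDerivWithinAt_nonneg (f' := D) (convex_Ici 0)
    continuous_E.continuousOn
  · intro x hx
    rw [interior_Ici] at hx
    exact (hasDerivAt_E (ne_of_gt hx)).hasDerivWithinAt
  · intro x hx
    rw [interior_Ici] at hx
    exact D_nonneg hx.le

lemma E_convex : ConvexOn ℝ (Ici (0:ℝ)) E := by
  apply convexOn_of_hasDerivWithinAt2_nonneg (f' := D) (f'' := D2) (convex_Ici 0)
    continuous_E.continuousOn
  · intro x hx
    rw [interior_Ici] at hx
    exact (hasDerivAt_E (ne_of_gt hx)).hasDerivWithinAt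
  · intro x hx
    rw [interior_Ici] at hx
    exact (hasDerivAt_D (ne_of_gt hx)).hasDerivWithinAt
  · intro x hx
    rw [interior_Ici] at hx
    exact D2_nonneg hx

lemma D_concave : ConcaveOn ℝ (Ici (0:ℝ)) D := by
  apply concaveOn_of_hasDerivWithinAt2_nonpos (f' := D2) (f'' := D3) (convex_Ici 0)
    continuousOn_D
  · intro x hx
    rw [interior_Ici] at hx
    exact (hasDerivAt_D (ne_of_gt hx)).hasDerivWithinAt
  · intro x hx
    rw [interior_Ici] at hx
    exact (hasDerivAt_D2 (ne_of_gt hx)).hasDerivWithinAt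
  · intro x hx
    rw [interior_Ici] at hx
    exact D3_nonpos hx

lemma D_zero : D 0 = 0 := by simp [D]

lemma D_subadd {a b : ℝ} (ha : 0 ≤ a) (hb : 0 ≤ b) : D (a + b) ≤ D a + D b := by
  rcases eq_or_lt_of_le (add_nonneg ha hb) with h | h
  · have ha0 : a = 0 := by linarith
    have hb0 : b = 0 := by linarith
    simp [ha0, hb0, D_zero]
  · have hs : (0:ℝ) < a + b := h
    have key : ∀ c, 0 ≤ c → c ≤ a + b → (c/(a+b)) * D (a+b) ≤ D c := by
      intro c hc hcs
      have hw2 : (0:ℝ) ≤ 1 - c/(a+b) := by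
        rw [sub_nonneg]; exact div_le_one_of_le₀ hcs hs.le
      have h1 := D_concave.2 (mem_Ici.mpr (add_nonneg ha hb)) (self_mem_Ici)
        (div_nonneg hc hs.le) hw2 (by ring)
      simp only [smul_eq_mul, mul_zero, add_zero, D_zero] at h1
      rw [div_mul_cancel₀ _ (ne_of_gt hs)] at h1
      linarith
    have k1 := key a ha (by linarith)
    have k2 := key b hb (by linarith)
    have : (a/(a+b)) * D (a+b) + (b/(a+b)) * D (a+b) = D (a+b) := by
      field_simp
    linarith

lemma D_midpoint {a b : ℝ} (ha : 0 ≤ a) (hb : 0 ≤ b) :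
    D a + D b ≤ 2 * D ((a + b)/2) := by
  have h1 := D_concave.2 (mem_Ici.mpr ha) (mem_Ici.mpr hb)
    (by norm_num : (0:ℝ) ≤ 1/2) (by norm_num : (0:ℝ) ≤ 1/2) (by norm_num)
  have h2 : (1/2 : ℝ) • a + (1/2 : ℝ) • b = (a+b)/2 := by
    simp [smul_eq_mul]; ring
  rw [h2] at h1
  simp only [smul_eq_mul] at h1
  linarith

lemma fs_eq (u v : ℝ) : fs u v = E (u+v) + E (u-v) - 2*E u := by
  simp only [fs, E]
  ring

lemma E_abs (x : ℝ) : E |x| = E x := by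
  rcases abs_cases x with ⟨h, _⟩ | ⟨h, _⟩
  · rw [h]
  · rw [h, E_even]

lemma fs_nonneg_of_nonneg {u v : ℝ} (hu : 0 ≤ u) (hv : 0 ≤ v) : 0 ≤ fs u v := by
  rw [fs_eq]
  have habs : E (u - v) = E |u - v| := (E_abs _).symm
  have hcvx := E_convex.2 (mem_Ici.mpr (by linarith : (0:ℝ) ≤ u + v))
    (mem_Ici.mpr (abs_nonneg (u - v))) (by norm_num : (0:ℝ) ≤ 1/2)
    (by norm_num : (0:ℝ) ≤ 1/2) (by norm_num)
  simp only [smul_eq_mul] at hcvx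
  have hmax : (1/2:ℝ) * (u+v) + (1/2:ℝ) * |u - v| = max u v := by
    rcases le_total u v with h | h
    · rw [abs_of_nonpos (by linarith), max_eq_right h]; ring
    · rw [abs_of_nonneg (by linarith), max_eq_left h]; ring
  rw [hmax] at hcvx
  have hmono : E u ≤ E (max u v) :=
    E_mono (mem_Ici.mpr hu) (mem_Ici.mpr (le_trans hu (le_max_left u v))) (le_max_left u v)
  rw [habs]
  linarith

lemma fs_le_of_nonneg {u v : ℝ} (hu : 0 ≤ u) (hv : 0 ≤ v) : fs u v ≤ fs 0 v := by
  set φ : ℝ → ℝ := fun t => E (t+v) + E (t-v) - 2*E t with hφ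
  have hφc : Continuous φ := by
    apply Continuous.sub
    · exact ((continuous_E.comp (continuous_id.add continuous_const)).add
        (continuous_E.comp (continuous_id.sub continuous_const)))
    · exact continuous_const.mul continuous_E
  have hder : ∀ x : ℝ, x ≠ 0 → x + v ≠ 0 → x - v ≠ 0 →
      HasDerivAt φ (D (x+v) + D (x-v) - 2*D x) x := by
    intro x h1 h2 h3
    have d1 : HasDerivAt (fun t => E (t+v)) (D (x+v)) x :=
      HasDerivAt.comp_add_const x v (hasDerivAt_E h2)
    have d2 : HasDerivAt (fun t => E (t-v)) (D (x-v)) x := by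
      have := HasDerivAt.comp_add_const x (-v) (by
        rw [show x + -v = x - v by ring]; exact hasDerivAt_E h3)
      simpa [sub_eq_add_neg] using this
    exact (d1.add d2).sub ((hasDerivAt_E h1).const_mul 2)
  have A1 : AntitoneOn φ (Icc 0 v) := by
    apply antitoneOn_of_hasDerivWithinAt_nonpos
      (f' := fun x => D (x+v) + D (x-v) - 2*D x) (convex_Icc 0 v) hφc.continuousOn
    · intro x hx
      rw [interior_Icc] at hx
      exact (hder x (ne_of_gt hx.1) (by nlinarith [hx.1, hx.2] : x + v ≠ 0)
        (ne_of_lt (by linarith [hx.2] : x - v < 0))).hasDerivWithinAt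
    · intro x hx
      rw [interior_Icc] at hx
      have hx1 := hx.1
      have hx2 := hx.2
      have hxv : D (x - v) = - D (v - x) := by
        rw [show x - v = -(v-x) by ring, D_neg]
      have hsub1 : D (x+v) ≤ D (v-x) + D (2*x) := by
        have := D_subadd (by linarith : (0:ℝ) ≤ v - x) (by linarith : (0:ℝ) ≤ 2*x)
        rwa [show v - x + 2*x = x + v by ring] at this
      have hsub2 : D (2*x) ≤ 2 * D x := by
        have := D_subadd (le_of_lt hx.1) (le_of_lt hx.1)
        rw [show x + x = 2*x by ring] at this
        linarith
      rw [hxv]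
      linarith
  have A2 : AntitoneOn φ (Ici v) := by
    apply antitoneOn_of_hasDerivWithinAt_nonpos
      (f' := fun x => D (x+v) + D (x-v) - 2*D x) (convex_Ici v) hφc.continuousOn
    · intro x hx
      rw [interior_Ici] at hx
      have hxv2 : v < x := hx
      have hx0 : 0 < x := lt_of_le_of_lt hv hx
      exact (hder x (ne_of_gt hx0) (by positivity) (ne_of_gt (by linarith))).hasDerivWithinAt
    · intro x hx
      rw [interior_Ici] at hx
      have hxv2 : v < x := hx
      have hx0 : 0 < x := lt_of_le_of_lt hv hx
      have := D_midpoint (by linarith : (0:ℝ) ≤ x + v) (by linarith : (0:ℝ) ≤ x - v)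
      rw [show (x + v + (x - v))/2 = x by ring] at this
      linarith
  have key : φ u ≤ φ 0 := by
    rcases le_total u v with h | h
    · exact A1 (left_mem_Icc.mpr hv) ⟨hu, h⟩ hu
    · calc φ u ≤ φ v := A2 (mem_Ici.mpr le_rfl) (mem_Ici.mpr h) h
        _ ≤ φ 0 := A1 (left_mem_Icc.mpr hv) (right_mem_Icc.mpr hv) hv
  rw [fs_eq, fs_eq]
  simpa [hφ] using key

lemma fs_abs (u v : ℝ) : fs |u| |v| = fs u v := by
  rw [fs_eq, fs_eq]
  have hEu : E |u| = E u := E_abs u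
  rcases abs_cases u with ⟨hu, _⟩ | ⟨hu, _⟩ <;> rcases abs_cases v with ⟨hv, _⟩ | ⟨hv, _⟩ <;>
    rw [hu, hv]
  · rw [show u + -v = u - v by ring, show u - -v = u + v by ring]
    ring
  · rw [show -u + v = -(u - v) by ring, show -u - v = -(u + v) by ring, E_even, E_even, E_even]
    ring
  · rw [show -u + -v = -(u + v) by ring, show -u - -v = -(u - v) by ring, E_even, E_even,
      E_even]

theorem stmt_0 (u v : ℝ) : 0 ≤ fs u v ∧ fs u v ≤ fs 0 v := by
  have h0 : fs 0 |v| = fs 0 v := by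
    rw [← abs_zero, fs_abs, abs_zero]
  constructor
  · rw [← fs_abs]
    exact fs_nonneg_of_nonneg (abs_nonneg u) (abs_nonneg v)
  · have h1 := fs_le_of_nonneg (abs_nonneg u) (abs_nonneg v)
    rw [fs_abs, h0] at h1
    exact h1
end

section
/- For all v ∈ ℝ, v·coth(v/2) - 2 ≤ v²/6; equivalently, f_s(0,v) = 2[(v/2)coth(v/2) - 1] ≤ (2/3)(v/2)². -/
open Real

lemma auxA : ∀ x : ℝ, 0 ≤ x → Real.sinh x ≤ x * Real.cosh x := by
  intro x hx
  set f : ℝ → ℝ := fun x => x * Real.cosh x - Real.sinh x with hf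
  have hmono : MonotoneOn f (Set.Ici 0) := by
    apply monotoneOn_of_deriv_nonneg (convex_Ici 0)
    · fun_prop
    · apply Differentiable.differentiableOn; fun_prop
    · intro x hx
      have hder : HasDerivAt f (x * Real.sinh x) x := by
        have h1 := ((hasDerivAt_id x).mul (Real.hasDerivAt_cosh x)).sub
          (Real.hasDerivAt_sinh x)
        exact h1.congr_deriv (by simp only [id_eq]; ring)
      rw [hder.deriv]
      rw [interior_Ici] at hx
      exact mul_nonneg (le_of_lt hx) (Real.sinh_nonneg_iff.mpr (le_of_lt hx))
  have h0 : f 0 = 0 := by simp [hf]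
  have := hmono (Set.self_mem_Ici) (Set.mem_Ici.mpr hx) hx
  rw [h0] at this
  simpa [hf] using this

lemma auxB : ∀ x : ℝ, 0 ≤ x → x * Real.cosh x ≤ (1 + x ^ 2 / 3) * Real.sinh x := by
  intro x hx
  set g : ℝ → ℝ := fun x => (1 + x ^ 2 / 3) * Real.sinh x - x * Real.cosh x with hg
  have hmono : MonotoneOn g (Set.Ici 0) := by
    apply monotoneOn_of_deriv_nonneg (convex_Ici 0)
    · fun_prop
    · apply Differentiable.differentiableOn; fun_prop
    · intro x hx
      rw [interior_Ici] at hx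
      have hder : HasDerivAt g (x / 3 * (x * Real.cosh x - Real.sinh x)) x := by
        have h1 : HasDerivAt (fun x : ℝ => 1 + x ^ 2 / 3) (2 * x / 3) x := by
          have := ((hasDerivAt_pow 2 x).div_const 3).const_add 1
          exact this.congr_deriv (by push_cast; ring)
        have h2 := (h1.mul (Real.hasDerivAt_sinh x)).sub
          ((hasDerivAt_id x).mul (Real.hasDerivAt_cosh x))
        exact h2.congr_deriv (by simp only [id_eq]; ring)
      rw [hder.deriv]
      have := auxA x (le_of_lt hx)
      have h3 : (0:ℝ) ≤ x / 3 := by have := Set.mem_Ioi.mp hx; linarith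
      nlinarith
  have h0 : g 0 = 0 := by simp [hg]
  have := hmono (Set.self_mem_Ici) (Set.mem_Ici.mpr hx) hx
  rw [h0] at this
  simpa [hg] using this

lemma auxKey : ∀ v : ℝ, 0 < v →
    v * Real.cosh (v / 2) / Real.sinh (v / 2) - 2 ≤ v ^ 2 / 6 := by
  intro v hv
  have hx : (0:ℝ) < v / 2 := by linarith
  have hs : 0 < Real.sinh (v / 2) := Real.sinh_pos_iff.mpr hx
  rw [sub_le_iff_le_add, div_le_iff₀ hs]
  have := auxB (v / 2) (le_of_lt hx)
  nlinarith [this]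

/-- For all real `v`, `v * coth (v/2) - 2 ≤ v² / 6`, where at `v = 0` the
left-hand side is understood by continuity to equal `0`. -/
theorem stmt_2 (v : ℝ) :
    (if v = 0 then (0 : ℝ) else v * Real.cosh (v / 2) / Real.sinh (v / 2) - 2)
      ≤ v ^ 2 / 6 := by
  rcases lt_trichotomy v 0 with hv | hv | hv
  · rw [if_neg (ne_of_lt hv)]
    have := auxKey (-v) (by linarith)
    have heq : (-v) * Real.cosh (-v / 2) / Real.sinh (-v / 2)
        = v * Real.cosh (v / 2) / Real.sinh (v / 2) := by
      rw [show (-v) / 2 = -(v / 2) by ring, Real.cosh_neg, Real.sinh_neg]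
      field_simp
    rw [heq] at this
    calc v * Real.cosh (v / 2) / Real.sinh (v / 2) - 2 ≤ (-v) ^ 2 / 6 := this
      _ = v ^ 2 / 6 := by ring
  · rw [if_pos hv]; positivity
  · rw [if_neg (ne_of_gt hv)]; exact auxKey v hv
end

section
/- The function h(u,v) = (u-v)/(cosh u - cosh v) on ℝ⁺ × ℝ⁺, with the value at u = v defined as the limit 1/sinh(u), is strictly decreasing in each of its arguments. -/
/-- `h(u,v) = (u-v)/(cosh u - cosh v)` with the value at `u = v` filled in by
the limit `1 / sinh u`. -/
noncomputable def hfun (u v : ℝ) : ℝ :=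
  if u = v then 1 / Real.sinh u else (u - v) / (Real.cosh u - Real.cosh v)

/-- The slope of `cosh` from `u` to `v`, with the diagonal value `sinh u`. -/
noncomputable def gfun (u v : ℝ) : ℝ :=
  if v = u then Real.sinh u else (Real.cosh v - Real.cosh u) / (v - u)

lemma cosh_strictConvex : StrictConvexOn ℝ Set.univ Real.cosh := by
  have : StrictMono (deriv Real.cosh) := by
    rw [Real.deriv_cosh]; exact Real.sinh_strictMono
  exact this.strictConvexOn_univ_of_deriv Real.continuous_cosh

lemma hfun_eq_one_div (u v : ℝ) : hfun u v = 1 / gfun u v := by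
  rcases eq_or_ne u v with rfl | h
  · simp [hfun, gfun]
  · rw [hfun, gfun, if_neg h, if_neg (Ne.symm h), one_div, inv_div, ← neg_div_neg_eq,
      neg_sub, neg_sub]

lemma gfun_pos {u v : ℝ} (hu : 0 < u) (hv : 0 < v) : 0 < gfun u v := by
  rw [gfun]
  rcases eq_or_ne v u with rfl | h
  · simpa using Real.sinh_pos_iff.2 hu
  · rw [if_neg h]
    rcases lt_or_gt_of_ne h with hlt | hlt
    · apply div_pos_of_neg_of_neg
      · rw [sub_neg, Real.cosh_lt_cosh, abs_of_pos hv, abs_of_pos hu]; exact hlt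
      · linarith
    · apply div_pos
      · rw [sub_pos, Real.cosh_lt_cosh, abs_of_pos hv, abs_of_pos hu]; exact hlt
      · linarith

lemma gfun_strictMono {u : ℝ} : StrictMonoOn (gfun u) (Set.Ioi 0) := by
  intro v₁ _ v₂ _ h12
  have hdiff : DifferentiableAt ℝ Real.cosh u := Real.differentiable_cosh u
  rw [gfun, gfun]
  rcases eq_or_ne v₁ u with rfl | h1
  · rw [if_pos rfl, if_neg (ne_of_gt h12)]
    have := cosh_strictConvex.deriv_lt_slope (Set.mem_univ v₁) (Set.mem_univ v₂) h12 hdiff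
    rwa [Real.deriv_cosh, slope_def_field] at this
  · rcases eq_or_ne v₂ u with rfl | h2
    · rw [if_neg h1, if_pos rfl]
      have := cosh_strictConvex.slope_lt_deriv (Set.mem_univ v₁) (Set.mem_univ v₂) h12 hdiff
      rw [Real.deriv_cosh, slope_def_field] at this
      rwa [← neg_div_neg_eq, neg_sub, neg_sub]
    · rw [if_neg h1, if_neg h2]
      exact cosh_strictConvex.secant_strict_mono (Set.mem_univ u) (Set.mem_univ v₁)
        (Set.mem_univ v₂) h1 h2 h12

lemma hfun_anti {u : ℝ} (hu : 0 < u) : StrictAntiOn (fun v => hfun u v) (Set.Ioi 0) := by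
  intro v₁ h1 v₂ h2 h12
  simp only [hfun_eq_one_div]
  exact one_div_lt_one_div_of_lt (gfun_pos hu h1) (gfun_strictMono h1 h2 h12)

lemma hfun_symm (u v : ℝ) : hfun u v = hfun v u := by
  rcases eq_or_ne u v with rfl | h
  · rfl
  · rw [hfun, hfun, if_neg h, if_neg (Ne.symm h), ← neg_div_neg_eq, neg_sub, neg_sub]

/-- `h` is strictly decreasing in each of its arguments on `(0,∞)`. -/
theorem stmt_3 :
    (∀ u : ℝ, 0 < u → StrictAntiOn (fun v => hfun u v) (Set.Ioi 0)) ∧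
    (∀ v : ℝ, 0 < v → StrictAntiOn (fun u => hfun u v) (Set.Ioi 0)) := by
  constructor
  · exact fun u hu => hfun_anti hu
  · intro v hv
    have := hfun_anti hv
    simpa only [hfun_symm] using this
end

section
/- Let (ε_k)_{k∈ℕ} be a strictly positive sequence with Σ_{k≥1} e^{-β ε_k} < ∞ for some β > 0, let δ_k = C e^{-α ε_k} with C > 0 and α > β, set ε_{-k} = -ε_k and δ_{-k} = δ_k, and let δ₀ > 0. If F: ℝ → ℂ is locally integrable, polynomially bounded (|F(ε)| ≤ D(1 + |ε|^N) for some D, N > 0), and supported in S = ⋃_{k∈ℤ∖{0}} {ε : |ε - ε_k| < δ_k} ∪ (-δ₀, δ₀), then the function z ↦ (1/2π)∫_ℝ e^{izε} F(ε) dε is well-defined and analytic on the strip |Im z| < α - β. -/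
open MeasureTheory Set

lemma aux_poly_exp (r C N : ℝ) (hr : 0 < r) (hC : 0 < C) (hN : 0 ≤ N) :
    ∃ M : ℝ, 0 < M ∧ ∀ s : ℝ, 0 ≤ s → 1 + (s + C) ^ N ≤ M * Real.exp (r * s) := by
  set n : ℕ := max 1 ⌈N⌉₊ with hn
  set q : ℝ := min (r / n) 1 with hq
  have hq0 : 0 < q := lt_min (div_pos hr (by positivity)) one_pos
  have hq1 : q ≤ 1 := min_le_right _ _
  refine ⟨2 * (1 + C) ^ n / q ^ n, by positivity, fun s hs => ?_⟩
  have hb1 : (1 : ℝ) ≤ 1 + C + s := by linarith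
  have h1 : (s + C) ^ N ≤ (1 + C + s) ^ N :=
    Real.rpow_le_rpow (by linarith) (by linarith) hN
  have h2 : (1 + C + s) ^ N ≤ (1 + C + s) ^ (n : ℝ) :=
    Real.rpow_le_rpow_of_exponent_le hb1
      ((Nat.le_ceil N).trans (Nat.cast_le.mpr (le_max_right 1 ⌈N⌉₊)))
  rw [Real.rpow_natCast] at h2
  have h3 : (1 : ℝ) ≤ (1 + C + s) ^ n := one_le_pow₀ hb1
  have h4 : (1 + C + s) ^ n ≤ (1 + C) ^ n * (1 + s) ^ n := by
    rw [← mul_pow]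
    exact pow_le_pow_left₀ (by linarith) (by nlinarith) n
  have h5 : 1 + s ≤ Real.exp (q * s) / q := by
    rw [le_div_iff₀ hq0]
    have := Real.add_one_le_exp (q * s)
    nlinarith
  have h6 : (1 + s) ^ n ≤ (Real.exp (q * s) / q) ^ n :=
    pow_le_pow_left₀ (by linarith) h5 n
  have h7 : (Real.exp (q * s) / q) ^ n = Real.exp ((n : ℝ) * (q * s)) / q ^ n := by
    rw [div_pow, ← Real.exp_nat_mul]
  have h8 : Real.exp ((n : ℝ) * (q * s)) ≤ Real.exp (r * s) := by
    apply Real.exp_le_exp.mpr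
    have hnq : (n : ℝ) * q ≤ r := by
      calc (n : ℝ) * q ≤ (n : ℝ) * (r / n) := by
            apply mul_le_mul_of_nonneg_left (min_le_left _ _) (by positivity)
        _ = r := by have hn0 : (n:ℝ) ≠ 0 := (by positivity); field_simp
    nlinarith
  have hqn : 0 < q ^ n := by positivity
  have hC1n : (0:ℝ) ≤ (1 + C) ^ n := by positivity
  calc 1 + (s + C) ^ N ≤ 2 * (1 + C + s) ^ n := by nlinarith
    _ ≤ 2 * ((1 + C) ^ n * ((Real.exp (q * s) / q) ^ n)) := by
        have := (h4.trans (mul_le_mul_of_nonneg_left h6 hC1n))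
        linarith
    _ ≤ 2 * (1 + C) ^ n / q ^ n * Real.exp (r * s) := by
        rw [h7]
        have heq : 2 * (1 + C) ^ n / q ^ n * Real.exp (r * s)
            = 2 * ((1 + C) ^ n * (Real.exp (r * s) / q ^ n)) := by ring
        rw [heq]
        gcongr

lemma aux_integrable (β α C δ₀ D N : ℝ) (hβ : 0 < β) (hαβ : β < α) (hC : 0 < C)
    (hδ₀ : 0 < δ₀) (hD : 0 < D) (hN : 0 < N)
    (ε : ℕ → ℝ) (hε : ∀ k, 0 < ε k)
    (hsum : Summable fun k => Real.exp (-β * ε k))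
    (F : ℝ → ℂ)
    (hloc : LocallyIntegrable F volume)
    (hbound : ∀ x : ℝ, ‖F x‖ ≤ D * (1 + |x| ^ N))
    (hsupp : Function.support F ⊆
      (⋃ k : ℕ,
        (Ioo (ε k - C * Real.exp (-α * ε k)) (ε k + C * Real.exp (-α * ε k)) ∪
         Ioo (-ε k - C * Real.exp (-α * ε k)) (-ε k + C * Real.exp (-α * ε k)))) ∪
      Ioo (-δ₀) δ₀)
    (t : ℝ) (ht0 : 0 ≤ t) (ht : t < α - β) :
    Integrable (fun x : ℝ => Real.exp (t * |x|) * ‖F x‖) := by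
  set δ : ℕ → ℝ := fun k => C * Real.exp (-α * ε k) with hδdef
  set A : ℕ → Set ℝ := fun k =>
    Ioo (ε k - δ k) (ε k + δ k) ∪ Ioo (-ε k - δ k) (-ε k + δ k) with hAdef
  set S : Set ℝ := (⋃ k, A k) ∪ Ioo (-δ₀) δ₀ with hSdef
  set g : ℝ → ℝ := fun x => Real.exp (t * |x|) * (D * (1 + |x| ^ N)) with hgdef
  have hg : Continuous g :=
    (Real.continuous_exp.comp (continuous_const.mul continuous_abs)).mul
      (continuous_const.mul (continuous_const.add
        (continuous_abs.rpow_const fun x => Or.inr hN.le)))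
  have hgnn : ∀ x, 0 ≤ g x := by
    intro x
    have : (0:ℝ) ≤ |x| ^ N := Real.rpow_nonneg (abs_nonneg x) N
    positivity
  have hAmeas : ∀ k, MeasurableSet (A k) := fun k =>
    measurableSet_Ioo.union measurableSet_Ioo
  have hSmeas : MeasurableSet S := ((MeasurableSet.iUnion hAmeas).union measurableSet_Ioo)
  have hδC : ∀ k, 0 < δ k ∧ δ k ≤ C := by
    intro k
    constructor
    · positivity
    · have : Real.exp (-α * ε k) ≤ 1 := by
        apply Real.exp_le_one_iff.mpr
        nlinarith [hε k, (hε k).le]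
      show C * Real.exp (-α * ε k) ≤ C
      nlinarith
  -- the constant bound on A k
  set c : ℕ → ℝ := fun k => Real.exp (t * (ε k + C)) * (D * (1 + (ε k + C) ^ N)) with hcdef
  have hgA : ∀ k, ∀ x ∈ A k, g x ≤ c k := by
    intro k x hx
    have hxa : |x| ≤ ε k + C := by
      rcases (hδC k) with ⟨h1, h2⟩
      have hεk := hε k
      rw [abs_le]
      rcases hx with hx | hx <;> rcases hx with ⟨hl, hr⟩ <;> constructor <;> nlinarith
    have h1 : Real.exp (t * |x|) ≤ Real.exp (t * (ε k + C)) :=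
      Real.exp_le_exp.mpr (mul_le_mul_of_nonneg_left hxa ht0)
    have h2 : |x| ^ N ≤ (ε k + C) ^ N := Real.rpow_le_rpow (abs_nonneg x) hxa hN.le
    have h3 : (0:ℝ) ≤ |x| ^ N := Real.rpow_nonneg (abs_nonneg x) N
    have := Real.exp_pos (t * |x|)
    show Real.exp (t * |x|) * (D * (1 + |x| ^ N))
        ≤ Real.exp (t * (ε k + C)) * (D * (1 + (ε k + C) ^ N))
    exact mul_le_mul h1 (by nlinarith) (by nlinarith) (Real.exp_pos _).le
  have hcnn : ∀ k, 0 ≤ c k := by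
    intro k
    have : (0:ℝ) ≤ (ε k + C) ^ N := Real.rpow_nonneg (by nlinarith [hε k]) N
    positivity
  -- measure of A k
  have hμA : ∀ k, volume (A k) ≤ ENNReal.ofReal (4 * δ k) := by
    intro k
    calc volume (A k) ≤ volume (Ioo (ε k - δ k) (ε k + δ k))
          + volume (Ioo (-ε k - δ k) (-ε k + δ k)) := measure_union_le _ _
      _ = ENNReal.ofReal (2 * δ k) + ENNReal.ofReal (2 * δ k) := by
          rw [Real.volume_Ioo, Real.volume_Ioo]
          congr 1 <;> congr 1 <;> ring
      _ = ENNReal.ofReal (4 * δ k) := by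
          rw [← ENNReal.ofReal_add (by nlinarith [(hδC k).1]) (by nlinarith [(hδC k).1])]
          congr 1; ring
  -- summability of the bounds
  obtain ⟨M, hM0, hM⟩ := aux_poly_exp (α - β - t) C N (by linarith) hC hN.le
  have hu : Summable fun k => c k * (4 * δ k) := by
    apply Summable.of_nonneg_of_le
      (fun k => mul_nonneg (hcnn k) (by nlinarith [(hδC k).1]))
      (fun k => ?_) (hsum.mul_left (4 * C * D * M * Real.exp (t * C)))
    have hMk := hM (ε k) (hε k).le
    have hexp : Real.exp (t * (ε k + C)) * Real.exp ((α - β - t) * ε k)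
        * Real.exp (-α * ε k) = Real.exp (t * C) * Real.exp (-β * ε k) := by
      rw [← Real.exp_add, ← Real.exp_add, ← Real.exp_add]
      congr 1; ring
    calc c k * (4 * δ k)
        = Real.exp (t * (ε k + C)) * (D * (1 + (ε k + C) ^ N))
          * (4 * (C * Real.exp (-α * ε k))) := by rw [hcdef, hδdef]
      _ ≤ Real.exp (t * (ε k + C)) * (D * (M * Real.exp ((α - β - t) * ε k)))
          * (4 * (C * Real.exp (-α * ε k))) := by
          gcongr
      _ = (4 * C * D * M) * (Real.exp (t * (ε k + C))
          * Real.exp ((α - β - t) * ε k) * Real.exp (-α * ε k)) := by ring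
      _ = 4 * C * D * M * Real.exp (t * C) * Real.exp (-β * ε k) := by rw [hexp]; ring
  -- integrability over the union
  have hU : IntegrableOn g (⋃ k, A k) := by
    refine ⟨hg.aestronglyMeasurable.restrict, ?_⟩
    have key : ∫⁻ x in ⋃ k, A k, ‖g x‖₊ ≤ ∑' k, ENNReal.ofReal (c k * (4 * δ k)) := by
      refine (lintegral_iUnion_le _ _).trans (ENNReal.tsum_le_tsum fun k => ?_)
      calc ∫⁻ x in A k, ‖g x‖₊
          ≤ ∫⁻ _x in A k, ENNReal.ofReal (c k) := by
            refine setLIntegral_mono' (hAmeas k) fun x hx => ?_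
            rw [← ENNReal.ofReal_coe_nnreal, coe_nnnorm, Real.norm_eq_abs, abs_of_nonneg (hgnn x)]
            exact ENNReal.ofReal_le_ofReal (hgA k x hx)
        _ = ENNReal.ofReal (c k) * volume (A k) := setLIntegral_const _ _
        _ ≤ ENNReal.ofReal (c k) * ENNReal.ofReal (4 * δ k) := mul_le_mul_right (hμA k) _
        _ = ENNReal.ofReal (c k * (4 * δ k)) := (ENNReal.ofReal_mul (hcnn k)).symm
    have hfin : ∑' k, ENNReal.ofReal (c k * (4 * δ k)) < ⊤ := by
      rw [← ENNReal.ofReal_tsum_of_nonneg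
        (fun k => mul_nonneg (hcnn k) (by nlinarith [(hδC k).1])) hu]
      exact ENNReal.ofReal_lt_top
    exact lt_of_le_of_lt key hfin
  have hIδ : IntegrableOn g (Ioo (-δ₀) δ₀) :=
    (hg.integrableOn_Icc).mono_set Ioo_subset_Icc_self
  have hS : IntegrableOn g S := hU.union hIδ
  have hind : Integrable (S.indicator g) := (integrable_indicator_iff hSmeas).mpr hS
  refine hind.mono' ?_ ?_
  · exact (Real.continuous_exp.comp
      (continuous_const.mul continuous_abs)).aestronglyMeasurable.mul
      hloc.aestronglyMeasurable.norm
  · refine Filter.Eventually.of_forall fun x => ?_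
    have hFnn : (0:ℝ) ≤ ‖F x‖ := norm_nonneg _
    rw [Real.norm_eq_abs, abs_of_nonneg (by positivity)]
    by_cases hFx : F x = 0
    · have h0 : Real.exp (t * |x|) * ‖F x‖ = 0 := by rw [hFx]; simp
      rw [h0]
      exact indicator_nonneg (fun y _ => hgnn y) x
    · have hxS : x ∈ S := hsupp hFx
      rw [indicator_of_mem hxS]
      have hb := hbound x
      have he := Real.exp_pos (t * |x|)
      show Real.exp (t * |x|) * ‖F x‖ ≤ Real.exp (t * |x|) * (D * (1 + |x| ^ N))
      nlinarith

/-- Paley–Wiener-type lemma: if `F : ℝ → ℂ` is locally integrable, polynomially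
bounded, and supported in a union of intervals of exponentially shrinking radii
`δ_k = C e^{-α ε_k}` around points `± ε_k` (with `Σ e^{-β ε_k} < ∞`, `α > β`)
together with a bounded interval `(-δ₀, δ₀)`, then
`z ↦ (1/2π) ∫ e^{izε} F(ε) dε` is well-defined and analytic on the strip
`|Im z| < α - β`. -/
theorem stmt_5 (β α C δ₀ D N : ℝ) (hβ : 0 < β) (hαβ : β < α) (hC : 0 < C)
    (hδ₀ : 0 < δ₀) (hD : 0 < D) (hN : 0 < N)
    (ε : ℕ → ℝ) (hε : ∀ k, 0 < ε k)
    (hsum : Summable fun k => Real.exp (-β * ε k))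
    (F : ℝ → ℂ)
    (hloc : LocallyIntegrable F volume)
    (hbound : ∀ x : ℝ, ‖F x‖ ≤ D * (1 + |x| ^ N))
    (hsupp : Function.support F ⊆
      (⋃ k : ℕ,
        (Ioo (ε k - C * Real.exp (-α * ε k)) (ε k + C * Real.exp (-α * ε k)) ∪
         Ioo (-ε k - C * Real.exp (-α * ε k)) (-ε k + C * Real.exp (-α * ε k)))) ∪
      Ioo (-δ₀) δ₀) :
    (∀ z : ℂ, |z.im| < α - β →
        Integrable (fun x : ℝ => Complex.exp (Complex.I * z * x) * F x)) ∧
    DifferentiableOn ℂ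
      (fun z : ℂ =>
        (1 / (2 * Real.pi)) * ∫ x : ℝ, Complex.exp (Complex.I * z * x) * F x)
      {z : ℂ | |z.im| < α - β} := by

  have key := aux_integrable β α C δ₀ D N hβ hαβ hC hδ₀ hD hN ε hε hsum F hloc hbound hsupp
  have hFm : AEStronglyMeasurable F volume := hloc.aestronglyMeasurable
  have hre : ∀ (z : ℂ) (x : ℝ), (Complex.I * z * (x : ℂ)).re = -z.im * x := by
    intro z x
    simp [Complex.mul_re, Complex.mul_im]
  have hnorm : ∀ (z : ℂ) (x : ℝ),
      ‖Complex.exp (Complex.I * z * x)‖ = Real.exp (-z.im * x) := by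
    intro z x
    rw [Complex.norm_exp, hre]
  have hexple : ∀ (z : ℂ) (x : ℝ), Real.exp (-z.im * x) ≤ Real.exp (|z.im| * |x|) := by
    intro z x
    apply Real.exp_le_exp.mpr
    calc -z.im * x ≤ |(-z.im) * x| := le_abs_self _
      _ = |z.im| * |x| := by rw [abs_mul, abs_neg]
  have hmeas : ∀ z : ℂ, AEStronglyMeasurable
      (fun x : ℝ => Complex.exp (Complex.I * z * x) * F x) volume := by
    intro z
    exact (Complex.continuous_exp.comp
      (continuous_const.mul Complex.continuous_ofReal)).aestronglyMeasurable.mul hFm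
  have hint : ∀ z : ℂ, |z.im| < α - β →
      Integrable (fun x : ℝ => Complex.exp (Complex.I * z * x) * F x) := by
    intro z hz
    refine (key |z.im| (abs_nonneg _) hz).mono' (hmeas z) ?_
    refine Filter.Eventually.of_forall fun x => ?_
    rw [norm_mul, hnorm]
    have h1 := hexple z x
    have h2 : (0:ℝ) ≤ ‖F x‖ := norm_nonneg _
    exact mul_le_mul_of_nonneg_right h1 h2
  refine ⟨hint, ?_⟩
  intro z₀ hz₀
  simp only [mem_setOf_eq] at hz₀
  set t₀ : ℝ := |z₀.im| with ht₀
  set ρ : ℝ := (α - β - t₀) / 2 with hρ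
  have hρ0 : 0 < ρ := by simp only [hρ]; linarith
  set t₁ : ℝ := t₀ + ρ with ht₁
  have ht₁lt : t₁ < α - β := by simp only [ht₁, hρ]; linarith
  set t₂ : ℝ := (t₁ + (α - β)) / 2 with ht₂
  have ht₂lt : t₂ < α - β := by simp only [ht₂]; linarith
  have ht₂0 : 0 ≤ t₂ := by
    have : (0:ℝ) ≤ t₀ := abs_nonneg _
    simp only [ht₂, ht₁]; linarith
  set d : ℝ := t₂ - t₁ with hd
  have hd0 : 0 < d := by simp only [hd, ht₂]; linarith
  -- bound function
  set bound : ℝ → ℝ := fun x => (1 / d) * (Real.exp (t₂ * |x|) * ‖F x‖) with hbd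
  have hbound_int : Integrable bound := (key t₂ ht₂0 ht₂lt).const_mul _
  -- the derivative
  set F' : ℂ → ℝ → ℂ := fun z x => Complex.exp (Complex.I * z * x) * (Complex.I * x) * F x
    with hF'
  have hderiv : ∀ (x : ℝ) (z : ℂ),
      HasDerivAt (fun w : ℂ => Complex.exp (Complex.I * w * x) * F x) (F' z x) z := by
    intro x z
    have h1 : HasDerivAt (fun w : ℂ => Complex.I * w * (x : ℂ)) (Complex.I * x) z := by
      have := ((hasDerivAt_id z).mul_const (x : ℂ)).const_mul Complex.I
      simpa [mul_assoc, mul_one] using this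
    exact (h1.cexp).mul_const (F x)
  have hzball : ∀ z ∈ Metric.ball z₀ ρ, |z.im| ≤ t₁ := by
    intro z hz
    have h1 : |z.im - z₀.im| ≤ ‖z - z₀‖ := by
      have := Complex.abs_im_le_norm (z - z₀)
      simpa [Complex.sub_im] using this
    have h2 : ‖z - z₀‖ < ρ := by
      rw [← dist_eq_norm]; exact Metric.mem_ball.mp hz
    have h3 : |z.im| ≤ |z₀.im| + |z.im - z₀.im| := by
      have := abs_sub_abs_le_abs_sub z.im z₀.im
      have h4 := abs_add_le z₀.im (z.im - z₀.im)
      calc |z.im| = |z₀.im + (z.im - z₀.im)| := by ring_nf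
        _ ≤ |z₀.im| + |z.im - z₀.im| := abs_add_le _ _
    simp only [ht₁]
    linarith
  have hF'bound : ∀ (x : ℝ), ∀ z ∈ Metric.ball z₀ ρ, ‖F' z x‖ ≤ bound x := by
    intro x z hz
    have him := hzball z hz
    rw [hF']
    simp only
    rw [norm_mul, norm_mul, hnorm]
    have hIx : ‖Complex.I * (x : ℂ)‖ = |x| := by
      rw [norm_mul, Complex.norm_I, one_mul, Complex.norm_real, Real.norm_eq_abs]
    rw [hIx]
    have h1 : Real.exp (-z.im * x) ≤ Real.exp (t₁ * |x|) := by
      apply Real.exp_le_exp.mpr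
      calc -z.im * x ≤ |z.im| * |x| := by
            calc -z.im * x ≤ |(-z.im) * x| := le_abs_self _
              _ = |z.im| * |x| := by rw [abs_mul, abs_neg]
        _ ≤ t₁ * |x| := mul_le_mul_of_nonneg_right him (abs_nonneg x)
    have h2 : |x| ≤ (1 / d) * Real.exp (d * |x|) := by
      rw [one_div, inv_mul_eq_div, le_div_iff₀ hd0]
      nlinarith [Real.add_one_le_exp (d * |x|), abs_nonneg x]
    calc Real.exp (-z.im * x) * |x| * ‖F x‖
        ≤ Real.exp (t₁ * |x|) * ((1 / d) * Real.exp (d * |x|)) * ‖F x‖ := by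
          apply mul_le_mul_of_nonneg_right _ (norm_nonneg _)
          exact mul_le_mul h1 h2 (abs_nonneg x) (Real.exp_pos _).le
      _ = bound x := by
          rw [hbd]
          simp only
          have hxx : t₁ * |x| + d * |x| = t₂ * |x| := by rw [hd]; ring
          rw [show Real.exp (t₁ * |x|) * ((1 / d) * Real.exp (d * |x|)) * ‖F x‖
              = (1 / d) * (Real.exp (t₁ * |x|) * Real.exp (d * |x|) * ‖F x‖) from by ring,
            ← Real.exp_add, hxx]
  have hF'meas : AEStronglyMeasurable (F' z₀) volume := by
    rw [hF']
    exact ((Complex.continuous_exp.comp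
      (continuous_const.mul Complex.continuous_ofReal)).mul
      (continuous_const.mul Complex.continuous_ofReal)).aestronglyMeasurable.mul hFm
  have main := hasDerivAt_integral_of_dominated_loc_of_deriv_le (Metric.ball_mem_nhds z₀ hρ0)
    (Filter.Eventually.of_forall fun z => hmeas z)
    (hint z₀ hz₀)
    hF'meas
    (Filter.Eventually.of_forall fun x => hF'bound x)
    hbound_int
    (Filter.Eventually.of_forall fun x z _ => hderiv x z)
  have hda : DifferentiableAt ℂ
      (fun z : ℂ => ∫ x : ℝ, Complex.exp (Complex.I * z * x) * F x) z₀ :=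
    main.2.differentiableAt
  exact ((hda.const_mul _).differentiableWithinAt)
end

section
/- Suppose g is a smooth compactly supported function on ℝ whose Fourier transform ĝ satisfies |ĝ(ε)| ≤ K e^{-γ|ε|} for some K, γ > 0 and all ε outside a set S as in the preceding lemma (a union of intervals around points ε_k with exponentially shrinking radii δ_k = C e^{-α ε_k}, α > β, plus a bounded interval around 0, where Σ e^{-β ε_k} < ∞). Then g is identically zero. -/
open MeasureTheory Set

lemma aux_exp_abs_int {b : ℝ} (hb : 0 < b) :
    Integrable fun x : ℝ => Real.exp (-b * |x|) := by
  have h1 : IntegrableOn (fun x : ℝ => Real.exp (-b * |x|)) (Ioi 0) := by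
    apply (exp_neg_integrableOn_Ioi 0 hb).congr_fun ?_ measurableSet_Ioi
    intro x hx; simp only [abs_of_pos (show (0:ℝ) < x from hx)]
  have h2 : IntegrableOn (fun x : ℝ => Real.exp (-b * |x|)) (Iic 0) := by
    rw [← Measure.map_neg_eq_self (volume : Measure ℝ)]
    have m : MeasurableEmbedding fun x : ℝ => -x :=
      (Homeomorph.neg ℝ).measurableEmbedding
    rw [m.integrableOn_map_iff]
    have e1 : ((fun x : ℝ => -x) ⁻¹' Iic 0) = Ici 0 := by ext y; simp
    have e2 : ((fun x : ℝ => Real.exp (-b * |x|)) ∘ fun x : ℝ => -x)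
        = fun x : ℝ => Real.exp (-b * |x|) := by
      funext y; simp [Function.comp, abs_neg]
    rw [e1, e2]
    exact Iff.mpr integrableOn_Ici_iff_integrableOn_Ioi h1
  rw [← integrableOn_univ, ← Iic_union_Ioi (a := (0:ℝ))]
  exact h2.union h1

lemma aux_abs_exp_abs_int {b : ℝ} (hb : 0 < b) :
    Integrable fun x : ℝ => |x| * Real.exp (-b * |x|) := by
  have key : ∀ x : ℝ, |x| * Real.exp (-b * |x|) ≤ (2 / b) * Real.exp (-(b/2) * |x|) := by
    intro x
    have h1 : (b/2) * |x| ≤ Real.exp ((b/2) * |x|) := (Real.add_one_le_exp _).trans' (by linarith)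
    have h2 : |x| ≤ 2/b * Real.exp (b/2 * |x|) := by
      have := mul_le_mul_of_nonneg_left h1 (le_of_lt (show (0:ℝ) < 2/b by positivity))
      calc |x| = 2/b * (b/2 * |x|) := by field_simp
        _ ≤ 2/b * Real.exp (b/2 * |x|) := this
    calc |x| * Real.exp (-b * |x|) ≤ (2/b * Real.exp (b/2 * |x|)) * Real.exp (-b * |x|) :=
          mul_le_mul_of_nonneg_right h2 (Real.exp_pos _).le
      _ = 2/b * Real.exp (-(b/2) * |x|) := by
          rw [mul_assoc, ← Real.exp_add]; ring_nf
  apply Integrable.mono' ((aux_exp_abs_int (b := b/2) (by positivity)).const_mul (2/b))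
  · exact (continuous_abs.mul ((continuous_const.mul continuous_abs).rexp)).aestronglyMeasurable
  · refine Filter.Eventually.of_forall fun x => ?_
    rw [Real.norm_eq_abs, abs_of_nonneg (by positivity)]
    exact key x

set_option maxHeartbeats 1000000 in
/-- If `g` is a smooth compactly supported function on `ℝ` whose Fourier
transform `ĝ(ω) = ∫ e^{-iωτ} g(τ) dτ` satisfies `|ĝ(ε)| ≤ K e^{-γ|ε|}` for all
`ε` outside the set `S = ⋃_k {|ε ∓ ε_k| < δ_k} ∪ (-δ₀, δ₀)` with
`δ_k = C e^{-α ε_k}`, `Σ e^{-β ε_k} < ∞`, `0 < β < α`, then `g ≡ 0`. -/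
theorem stmt_6 (β α C δ₀ K γ : ℝ) (hβ : 0 < β) (hαβ : β < α) (hC : 0 < C)
    (hδ₀ : 0 < δ₀) (hK : 0 < K) (hγ : 0 < γ)
    (ε : ℕ → ℝ) (hε : ∀ k, 0 < ε k)
    (hsum : Summable fun k => Real.exp (-β * ε k))
    (g : ℝ → ℂ) (hg : ContDiff ℝ (⊤ : ℕ∞) g) (hgsupp : HasCompactSupport g)
    (hbound : ∀ x : ℝ,
      x ∉ ((⋃ k : ℕ,
        (Ioo (ε k - C * Real.exp (-α * ε k)) (ε k + C * Real.exp (-α * ε k)) ∪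
         Ioo (-ε k - C * Real.exp (-α * ε k)) (-ε k + C * Real.exp (-α * ε k)))) ∪
        Ioo (-δ₀) δ₀) →
      ‖∫ τ : ℝ, Complex.exp (-Complex.I * x * τ) * g τ‖ ≤ K * Real.exp (-γ * |x|)) :
    g = 0 := by
  set S : Set ℝ := ((⋃ k : ℕ,
        (Ioo (ε k - C * Real.exp (-α * ε k)) (ε k + C * Real.exp (-α * ε k)) ∪
         Ioo (-ε k - C * Real.exp (-α * ε k)) (-ε k + C * Real.exp (-α * ε k)))) ∪
        Ioo (-δ₀) δ₀) with hSdef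
  set F : ℝ → ℂ := fun x => ∫ τ : ℝ, Complex.exp (-Complex.I * x * τ) * g τ with hFdef
  have hα : 0 < α := hβ.trans hαβ
  have hgc : Continuous g := hg.continuous
  have hgint : Integrable g := hgc.integrable_of_hasCompactSupport hgsupp
  set M₀ : ℝ := ∫ τ : ℝ, ‖g τ‖ with hM₀
  have hM₀0 : 0 ≤ M₀ := integral_nonneg fun τ => norm_nonneg _
  set M₁ : ℝ := ∫ τ : ℝ, |τ| * ‖g τ‖ with hM₁
  have hM₁int : Integrable (fun τ : ℝ => |τ| * ‖g τ‖) := by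
    apply (continuous_abs.mul hgc.norm).integrable_of_hasCompactSupport
    exact (hgsupp.norm).mul_left
  have hM₁0 : 0 ≤ M₁ := integral_nonneg fun τ => by positivity
  have hnorm1 : ∀ x τ : ℝ, ‖Complex.exp (-Complex.I * x * τ)‖ = 1 := by
    intro x τ
    rw [Complex.norm_exp]
    norm_num [Complex.mul_re]
  have hker : ∀ x : ℝ, Integrable fun τ : ℝ => Complex.exp (-Complex.I * x * τ) * g τ := by
    intro x
    apply hgint.bdd_mul
    · exact (Complex.continuous_exp.comp
        (continuous_const.mul Complex.continuous_ofReal)).aestronglyMeasurable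
    · exact Filter.Eventually.of_forall fun τ => le_of_eq (hnorm1 x τ)
  have hFbd : ∀ x : ℝ, ‖F x‖ ≤ M₀ := by
    intro x
    refine (norm_integral_le_integral_norm _).trans (le_of_eq ?_)
    rw [hM₀]
    congr 1; funext τ; rw [norm_mul, hnorm1, one_mul]
  -- derivative of F
  have hFderiv : ∀ x : ℝ, HasDerivAt F
      (∫ τ : ℝ, (-Complex.I * τ) * (Complex.exp (-Complex.I * x * τ) * g τ)) x := by
    intro x₀
    rw [hFdef]
    have key := hasDerivAt_integral_of_dominated_loc_of_deriv_le (μ := volume) (𝕜 := ℝ)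
      (F := fun (x : ℝ) (τ : ℝ) => Complex.exp (-Complex.I * x * τ) * g τ)
      (F' := fun (x : ℝ) (τ : ℝ) => (-Complex.I * τ) * (Complex.exp (-Complex.I * x * τ) * g τ))
      (x₀ := x₀) (bound := fun τ => |τ| * ‖g τ‖) (Metric.ball_mem_nhds x₀ one_pos)
      (Filter.Eventually.of_forall fun x => (hker x).aestronglyMeasurable)
      (hker x₀) ?_ ?_ hM₁int ?_
    · exact key.2
    · apply Continuous.aestronglyMeasurable
      exact (continuous_const.mul Complex.continuous_ofReal).mul
        ((Complex.continuous_exp.comp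
          (continuous_const.mul Complex.continuous_ofReal)).mul hgc)
    · refine Filter.Eventually.of_forall fun τ => fun x _ => ?_
      have h1 : ‖Complex.exp (-Complex.I * x * τ)‖ = 1 := hnorm1 x τ
      simp only [norm_mul, h1, one_mul, norm_neg, Complex.norm_I, Complex.norm_real,
        Real.norm_eq_abs]
      exact le_rfl
    · refine Filter.Eventually.of_forall fun τ => fun x _ => ?_
      have h0 : HasDerivAt (fun x : ℝ => ((x : ℂ))) 1 x := Complex.ofRealCLM.hasDerivAt
      have h1 : HasDerivAt (fun x : ℝ => (-Complex.I * τ) * (x : ℂ)) (-Complex.I * τ) x := by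
        simpa using h0.const_mul (-Complex.I * (τ:ℂ))
      have h2 := (h1.cexp).mul_const (g τ)
      have e1 : (fun x : ℝ => Complex.exp (-Complex.I * ↑τ * ↑x) * g τ)
          = fun x : ℝ => Complex.exp (-Complex.I * ↑x * ↑τ) * g τ := by
        funext y; congr 2; ring
      rw [e1] at h2
      refine h2.congr_deriv ?_
      rw [show -Complex.I * ↑τ * ↑x = -Complex.I * ↑x * ↑τ by ring]
      ring
  have hF'bd : ∀ x : ℝ,
      ‖∫ τ : ℝ, (-Complex.I * τ) * (Complex.exp (-Complex.I * x * τ) * g τ)‖ ≤ M₁ := by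
    intro x
    refine (norm_integral_le_integral_norm _).trans (le_of_eq ?_)
    rw [hM₁]
    congr 1; funext τ
    simp only [norm_mul, hnorm1 x τ, one_mul, norm_neg, Complex.norm_I, Complex.norm_real,
      Real.norm_eq_abs]
  have hFlip : ∀ x y : ℝ, ‖F x - F y‖ ≤ M₁ * |x - y| := by
    intro x y
    have := Convex.norm_image_sub_le_of_norm_hasDerivWithin_le
      (f := F) (f' := fun x => ∫ τ : ℝ, (-Complex.I * τ) * (Complex.exp (-Complex.I * x * τ) * g τ))
      (s := univ) (C := M₁)
      (fun z _ => (hFderiv z).hasDerivWithinAt) (fun z _ => hF'bd z)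
      convex_univ (mem_univ y) (mem_univ x)
    simpa [Real.norm_eq_abs] using this
  have hFcont : Continuous F :=
    continuous_iff_continuousAt.2 fun x => (hFderiv x).continuousAt
  have hSsym : ∀ y : ℝ, y ∉ S → -y ∉ S := by
    intro y hy hmem
    apply hy
    rw [hSdef] at hmem ⊢
    rcases hmem with hmem | hmem
    · rw [mem_iUnion] at hmem
      obtain ⟨k, hk⟩ := hmem
      left; rw [mem_iUnion]; refine ⟨k, ?_⟩
      rcases hk with hk | hk
      · right; rw [mem_Ioo] at hk ⊢; constructor <;> linarith [hk.1, hk.2]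
      · left; rw [mem_Ioo] at hk ⊢; constructor <;> linarith [hk.1, hk.2]
    · right; rw [mem_Ioo] at hmem ⊢; constructor <;> linarith [hmem.1, hmem.2]
  -- the global exponential bound
  obtain ⟨K₂, c, hc, hcγ, hcαβ, hK₂, hFexp⟩ :
      ∃ K₂ c : ℝ, 0 < c ∧ c ≤ γ ∧ c ≤ α - β ∧ 0 < K₂ ∧
        ∀ x : ℝ, ‖F x‖ ≤ K₂ * Real.exp (-c * |x|) := by
    set Sβ : ℝ := ∑' k, Real.exp (-β * ε k) with hSβ
    have hSβ0 : 0 ≤ Sβ := tsum_nonneg fun k => (Real.exp_pos _).le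
    set c : ℝ := min γ (α - β) with hcdef
    have hc : 0 < c := lt_min hγ (by linarith)
    set T₀ : ℝ := 2 * C * Sβ * Real.exp ((α - β) * C) with hT₀
    have hT₀0 : 0 ≤ T₀ := by positivity
    set x₀ : ℝ := max C δ₀ + 1 with hx₀
    have hx₀C : C < x₀ := by
      have := le_max_left C δ₀; rw [hx₀]; linarith
    have hx₀δ : δ₀ < x₀ := by
      have := le_max_right C δ₀; rw [hx₀]; linarith
    have hx₀0 : 0 < x₀ := by linarith
    have hgood : ∀ x : ℝ, x₀ ≤ x →
        ∃ y, x ≤ y ∧ y ≤ x + (T₀ + 1) * Real.exp (-c * x) ∧ y ∉ S := by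
      intro x hx
      by_contra hcon
      push_neg at hcon
      set ℓ : ℝ := (T₀ + 1) * Real.exp (-c * x) with hℓ
      have hℓ0 : 0 < ℓ := by positivity
      obtain ⟨A, hA⟩ : ∃ A : ℕ → Set ℝ, A = fun k => if x - C < ε k then
          Ioo (ε k - C * Real.exp (-α * ε k)) (ε k + C * Real.exp (-α * ε k)) else (∅ : Set ℝ) :=
        ⟨_, rfl⟩
      have hsub : Ico x (x + ℓ) ⊆ ⋃ k, A k := by
        intro y hy
        rw [mem_Ico] at hy
        have hyS : y ∈ S := hcon y hy.1 hy.2.le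
        have hyx : x₀ ≤ y := le_trans hx hy.1
        rw [hSdef] at hyS
        rcases hyS with hyS | hyS
        · rw [mem_iUnion] at hyS
          obtain ⟨k, hk⟩ := hyS
          have hδk : C * Real.exp (-α * ε k) < C := by
            have h1 : Real.exp (-α * ε k) < 1 := by
              rw [Real.exp_lt_one_iff]
              have := hε k; nlinarith
            nlinarith
          rcases hk with hk | hk
          · rw [mem_Ioo] at hk
            have hcond : x - C < ε k := by
              have : y - C < ε k := by nlinarith [hk.1]
              linarith [hy.1]
            rw [mem_iUnion]
            exact ⟨k, by rw [hA]; simp only [if_pos hcond]; exact mem_Ioo.2 hk⟩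
          · exfalso
            rw [mem_Ioo] at hk
            have := hε k
            have : y < C := by nlinarith [hk.2]
            linarith
        · exfalso
          rw [mem_Ioo] at hyS
          linarith [hyS.2]
      have hvol1 : volume (Ico x (x + ℓ)) ≤ ∑' k, volume (A k) :=
        (measure_mono hsub).trans (measure_iUnion_le _)
      obtain ⟨bk, hbk⟩ : ∃ bk : ℕ → ℝ, bk = fun k =>
          2 * C * Real.exp ((α - β) * (C - x)) * Real.exp (-β * ε k) := ⟨_, rfl⟩
      have hbknn : ∀ k, 0 ≤ bk k := fun k => by simp only [hbk]; positivity
      have hbksum : Summable bk := by rw [hbk]; exact hsum.mul_left _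
      have hvol2 : ∀ k, volume (A k) ≤ ENNReal.ofReal (bk k) := by
        intro k
        rw [hA]
        by_cases hcond : x - C < ε k
        all_goals simp only [if_pos, if_neg, hcond, if_true, if_false]
        · rw [Real.volume_Ioo]
          apply ENNReal.ofReal_le_ofReal
          have key : Real.exp (-α * ε k) ≤ Real.exp ((α - β) * (C - x)) * Real.exp (-β * ε k) := by
            rw [← Real.exp_add, Real.exp_le_exp]
            nlinarith [sub_pos.2 hαβ]
          simp only [hbk]
          nlinarith [mul_le_mul_of_nonneg_left key (by positivity : (0:ℝ) ≤ 2 * C)]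
        · simp [hbknn k]
      have hvol3 : volume (Ico x (x + ℓ)) ≤
          ENNReal.ofReal (2 * C * Real.exp ((α - β) * (C - x)) * Sβ) := by
        refine hvol1.trans ((ENNReal.tsum_le_tsum hvol2).trans (le_of_eq ?_))
        rw [← ENNReal.ofReal_tsum_of_nonneg hbknn hbksum]
        congr 1
        rw [hbk, hSβ]
        exact tsum_mul_left
      rw [Real.volume_Ico, add_sub_cancel_left] at hvol3
      have hTle : 2 * C * Real.exp ((α - β) * (C - x)) * Sβ ≤ T₀ * Real.exp (-c * x) := by
        have hexp : Real.exp ((α - β) * (C - x)) ≤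
            Real.exp ((α - β) * C) * Real.exp (-c * x) := by
          rw [← Real.exp_add, Real.exp_le_exp]
          have hcle : c ≤ α - β := min_le_right _ _
          nlinarith [hx₀0, hx]
        rw [hT₀]
        nlinarith [Real.exp_pos ((α - β) * (C - x)), Real.exp_pos (-c * x),
          mul_le_mul_of_nonneg_left hexp (by positivity : (0:ℝ) ≤ 2 * C * Sβ)]
      have := (ENNReal.ofReal_le_ofReal_iff (by positivity)).1
        (hvol3.trans (ENNReal.ofReal_le_ofReal hTle))
      rw [hℓ] at this
      nlinarith [Real.exp_pos (-c * x)]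
    -- bound for large |x|
    have hhb : ∀ x : ℝ, x₀ ≤ x →
        max ‖F x‖ ‖F (-x)‖ ≤ (K + M₁ * (T₀ + 1)) * Real.exp (-c * x) := by
      intro x hx
      obtain ⟨y, hxy, hyle, hyS⟩ := hgood x hx
      have h0y : 0 ≤ y := le_trans (le_of_lt hx₀0) (hx.trans hxy)
      have hyb := hbound y hyS
      have hyb' := hbound (-y) (hSsym y hyS)
      rw [abs_of_nonneg h0y] at hyb
      rw [abs_neg, abs_of_nonneg h0y] at hyb'
      have hmax : max ‖F y‖ ‖F (-y)‖ ≤ K * Real.exp (-γ * y) := max_le hyb hyb'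
      have hlip : |max ‖F x‖ ‖F (-x)‖ - max ‖F y‖ ‖F (-y)‖| ≤ M₁ * |x - y| := by
        refine (abs_max_sub_max_le_max _ _ _ _).trans (max_le ?_ ?_)
        · exact (abs_norm_sub_norm_le _ _).trans (hFlip x y)
        · refine (abs_norm_sub_norm_le _ _).trans ((hFlip (-x) (-y)).trans (le_of_eq ?_))
          rw [neg_sub_neg, abs_sub_comm]
      have hxy2 : |x - y| ≤ (T₀ + 1) * Real.exp (-c * x) := by
        rw [abs_sub_comm, abs_of_nonneg (by linarith)]
        linarith
      have hexp1 : Real.exp (-γ * y) ≤ Real.exp (-c * x) := by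
        rw [Real.exp_le_exp]
        have hcγ : c ≤ γ := min_le_left _ _
        nlinarith [hx.trans hxy, hx₀0]
      have h1 : max ‖F x‖ ‖F (-x)‖ ≤ max ‖F y‖ ‖F (-y)‖ + M₁ * |x - y| := by
        have := abs_le.1 hlip
        linarith [this.2]
      calc max ‖F x‖ ‖F (-x)‖ ≤ K * Real.exp (-γ * y) + M₁ * ((T₀ + 1) * Real.exp (-c * x)) := by
            refine h1.trans (add_le_add hmax ?_)
            exact mul_le_mul_of_nonneg_left hxy2 hM₁0
        _ ≤ K * Real.exp (-c * x) + M₁ * ((T₀ + 1) * Real.exp (-c * x)) := by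
            have := mul_le_mul_of_nonneg_left hexp1 hK.le
            linarith
        _ = (K + M₁ * (T₀ + 1)) * Real.exp (-c * x) := by ring
    refine ⟨max (K + M₁ * (T₀ + 1)) (M₀ * Real.exp (c * x₀)) + 1, c, hc,
      min_le_left _ _, min_le_right _ _, ?_, ?_⟩
    · have h1 : 0 < K + M₁ * (T₀ + 1) := by positivity
      have := le_max_left (K + M₁ * (T₀ + 1)) (M₀ * Real.exp (c * x₀))
      linarith
    · intro x
      set K₂ := max (K + M₁ * (T₀ + 1)) (M₀ * Real.exp (c * x₀)) + 1 with hK₂def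
      rcases le_or_gt x₀ |x| with h | h
      · have hb := hhb |x| h
        have hFx : ‖F x‖ ≤ max ‖F |x|‖ ‖F (-|x|)‖ := by
          rcases abs_choice x with h' | h'
          · rw [h']; exact le_max_left _ _
          · rw [h', neg_neg]; exact le_max_right _ _
        refine hFx.trans (hb.trans ?_)
        have h1 := le_max_left (K + M₁ * (T₀ + 1)) (M₀ * Real.exp (c * x₀))
        have h2 := Real.exp_pos (-c * |x|)
        rw [hK₂def]
        nlinarith
      · refine (hFbd x).trans ?_
        have h1 : Real.exp (-c * x₀) ≤ Real.exp (-c * |x|) := by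
          rw [Real.exp_le_exp]; nlinarith
        have h2 : M₀ = M₀ * Real.exp (c * x₀) * Real.exp (-c * x₀) := by
          rw [mul_assoc, ← Real.exp_add]; simp
        have h3 := le_max_right (K + M₁ * (T₀ + 1)) (M₀ * Real.exp (c * x₀))
        have h4 := Real.exp_pos (-c * |x|)
        have h5 := Real.exp_pos (-c * x₀)
        have h6 : 0 ≤ M₀ * Real.exp (c * x₀) := by positivity
        rw [hK₂def]
        nlinarith [mul_le_mul_of_nonneg_left h1 h6]
  -- relation with the Mathlib Fourier transform
  have hFG : ∀ x : ℝ, F x = FourierTransform.fourier g (x / (2 * Real.pi)) := by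
    intro x
    have key : ∀ v : ℝ, (Complex.exp (↑(-2 * Real.pi * v * (x / (2 * Real.pi))) * Complex.I)) • g v
        = Complex.exp (-Complex.I * ↑x * ↑v) * g v := by
      intro v
      rw [smul_eq_mul]
      congr 1
      have e : -2 * Real.pi * v * (x / (2 * Real.pi)) = -(v * x) := by
        have hπ := Real.pi_ne_zero
        field_simp
      rw [e]
      push_cast
      ring
    rw [Real.fourier_real_eq_integral_exp_smul, hFdef]
    simp only [key]
  have hGF : ∀ ξ : ℝ, FourierTransform.fourier g ξ = F (2 * Real.pi * ξ) := by
    intro ξ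
    rw [hFG (2 * Real.pi * ξ)]
    congr 1
    have := Real.pi_ne_zero
    field_simp
  have hGint : Integrable (FourierTransform.fourier g) := by
    have hfun : FourierTransform.fourier g = fun ξ : ℝ => F (2 * Real.pi * ξ) := funext hGF
    rw [hfun]
    apply Integrable.mono' ((aux_exp_abs_int hc).const_mul K₂)
    · exact (hFcont.comp (continuous_const.mul continuous_id)).aestronglyMeasurable
    · refine Filter.Eventually.of_forall fun ξ => ?_
      refine (hFexp _).trans ?_
      apply mul_le_mul_of_nonneg_left _ hK₂.le
      rw [Real.exp_le_exp, abs_mul, abs_of_pos (by positivity : (0:ℝ) < 2 * Real.pi)]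
      have h7 : 0 ≤ (2 * Real.pi - 1) * (c * |ξ|) :=
        mul_nonneg (by nlinarith [Real.pi_gt_three]) (mul_nonneg hc.le (abs_nonneg ξ))
      nlinarith [h7]
  -- the analytic extension
  set H : ℂ → ℂ := fun z => ∫ x : ℝ, F x * Complex.exp (Complex.I * x * z) with hHdef
  have hHreal : ∀ t : ℝ, H t = ((2 * Real.pi : ℝ) : ℂ) * g t := by
    intro t
    have hπ := Real.pi_ne_zero
    obtain ⟨φ, hφ⟩ : ∃ φ : ℝ → ℂ, φ = fun u =>
        FourierTransform.fourier g u * Complex.exp (Complex.I * (2 * Real.pi * u) * t) := ⟨_, rfl⟩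
    have e1 : (fun x : ℝ => F x * Complex.exp (Complex.I * x * t))
        = fun x : ℝ => φ (x / (2 * Real.pi)) := by
      funext x
      have hπC : (Real.pi : ℂ) ≠ 0 := by exact_mod_cast hπ
      rw [hφ]
      simp only
      rw [← hFG x]
      congr 1
      congr 1
      push_cast
      field_simp
    have e3 : ∫ u : ℝ, φ u = g t := by
      have inv := hgint.fourierInv_fourier_eq hGint (hgc.continuousAt (x := t))
      rw [← inv, Real.fourierInv_eq_fourier_neg,
        Real.fourier_real_eq_integral_exp_smul]
      rw [hφ]
      congr 1
      funext v
      rw [smul_eq_mul, mul_comm]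
      congr 1
      push_cast
      ring
    rw [hHdef]
    simp only
    rw [e1, Measure.integral_comp_div φ (2 * Real.pi), e3,
      abs_of_pos Real.two_pi_pos, Complex.real_smul]
  set U : Set ℂ := {z : ℂ | |z.im| < c / 4} with hUdef
  have hUopen : IsOpen U := by
    have : U = Complex.im ⁻¹' Ioo (-(c/4)) (c/4) := by
      ext z; simp [hUdef, abs_lt, and_comm]
    rw [this]
    exact isOpen_Ioo.preimage Complex.continuous_im
  have hUconv : Convex ℝ U := by
    have : U = Complex.imCLM ⁻¹' Ioo (-(c/4)) (c/4) := by
      ext z; simp [hUdef, abs_lt, and_comm]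
    rw [this]
    exact (convex_Ioo _ _).linear_preimage (Complex.imCLM : ℂ →L[ℝ] ℝ).toLinearMap
  have hnormexp : ∀ (x : ℝ) (z : ℂ), ‖Complex.exp (Complex.I * ↑x * z)‖
      = Real.exp (-(x * z.im)) := by
    intro x z
    rw [Complex.norm_exp]
    congr 1
    simp [Complex.mul_re, Complex.mul_im]
  have hbd2 : ∀ (x : ℝ) (z : ℂ), |z.im| ≤ c/2 →
      ‖F x‖ * Real.exp (-(x * z.im)) ≤ K₂ * Real.exp (-(c/2) * |x|) := by
    intro x z hz
    have h1 : -(x * z.im) ≤ |x| * (c/2) := by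
      calc -(x * z.im) ≤ |x * z.im| := neg_le_abs _
      _ = |x| * |z.im| := abs_mul _ _
      _ ≤ |x| * (c/2) := mul_le_mul_of_nonneg_left hz (abs_nonneg x)
    calc ‖F x‖ * Real.exp (-(x * z.im))
        ≤ (K₂ * Real.exp (-c * |x|)) * Real.exp (|x| * (c/2)) :=
          mul_le_mul (hFexp x) (Real.exp_le_exp.2 h1) (Real.exp_pos _).le (by positivity)
      _ = K₂ * Real.exp (-c * |x| + |x| * (c/2)) := by rw [mul_assoc, ← Real.exp_add]
      _ ≤ K₂ * Real.exp (-(c/2) * |x|) := by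
          apply mul_le_mul_of_nonneg_left _ hK₂.le
          rw [Real.exp_le_exp]
          nlinarith [abs_nonneg x]
  have hHdiff : DifferentiableOn ℂ H U := by
    intro z₀ hz₀
    apply DifferentiableAt.differentiableWithinAt
    rw [hUdef, mem_setOf_eq] at hz₀
    have himz : ∀ z ∈ Metric.ball z₀ (c/4), |z.im| ≤ c/2 := by
      intro z hz
      rw [Metric.mem_ball] at hz
      have h1 : |z.im - z₀.im| ≤ dist z z₀ := by
        rw [Complex.dist_eq]
        exact (Complex.abs_im_le_norm (z - z₀)).trans' (le_of_eq (by simp [Complex.sub_im]))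
      calc |z.im| ≤ |z₀.im| + |z.im - z₀.im| := by
            have := abs_sub_abs_le_abs_sub z.im z₀.im
            have := abs_add_le z₀.im (z.im - z₀.im)
            calc |z.im| = |z₀.im + (z.im - z₀.im)| := by ring_nf
              _ ≤ |z₀.im| + |z.im - z₀.im| := abs_add_le _ _
        _ ≤ c/2 := by linarith
    have key := hasDerivAt_integral_of_dominated_loc_of_deriv_le (μ := volume) (𝕜 := ℂ)
      (F := fun (z : ℂ) (x : ℝ) => F x * Complex.exp (Complex.I * x * z))
      (F' := fun (z : ℂ) (x : ℝ) => F x * (Complex.exp (Complex.I * x * z) * (Complex.I * x)))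
      (x₀ := z₀) (bound := fun x : ℝ => K₂ * (|x| * Real.exp (-(c/2) * |x|)))
      (Metric.ball_mem_nhds z₀ (by positivity : (0:ℝ) < c/4)) ?_ ?_ ?_ ?_ ?_ ?_
    · exact key.2.differentiableAt
    · refine Filter.Eventually.of_forall fun z => Continuous.aestronglyMeasurable ?_
      exact hFcont.mul (Complex.continuous_exp.comp
        ((continuous_const.mul Complex.continuous_ofReal).mul continuous_const))
    · apply Integrable.mono' ((aux_exp_abs_int (show (0:ℝ) < c/2 by positivity)).const_mul K₂)
      · exact (hFcont.mul (Complex.continuous_exp.comp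
          ((continuous_const.mul Complex.continuous_ofReal).mul
            continuous_const))).aestronglyMeasurable
      · refine Filter.Eventually.of_forall fun x => ?_
        rw [norm_mul, hnormexp]
        exact hbd2 x z₀ (by linarith)
    · apply Continuous.aestronglyMeasurable
      exact hFcont.mul ((Complex.continuous_exp.comp
        ((continuous_const.mul Complex.continuous_ofReal).mul continuous_const)).mul
        (continuous_const.mul Complex.continuous_ofReal))
    · refine Filter.Eventually.of_forall fun x => fun z hz => ?_
      rw [norm_mul, norm_mul, hnormexp, norm_mul, Complex.norm_I, one_mul,
        Complex.norm_real, Real.norm_eq_abs]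
      have := hbd2 x z (himz z hz)
      calc ‖F x‖ * (Real.exp (-(x * z.im)) * |x|)
          = (‖F x‖ * Real.exp (-(x * z.im))) * |x| := by ring
        _ ≤ (K₂ * Real.exp (-(c/2) * |x|)) * |x| :=
            mul_le_mul_of_nonneg_right this (abs_nonneg x)
        _ = K₂ * (|x| * Real.exp (-(c/2) * |x|)) := by ring
    · exact (aux_abs_exp_abs_int (show (0:ℝ) < c/2 by positivity)).const_mul K₂
    · refine Filter.Eventually.of_forall fun x => fun z _ => ?_
      have h1 : HasDerivAt (fun z : ℂ => Complex.I * ↑x * z) (Complex.I * ↑x) z := by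
        simpa using (hasDerivAt_id z).const_mul (Complex.I * (x:ℂ))
      exact (h1.cexp).const_mul (F x)
  have hHanalytic : AnalyticOnNhd ℂ H U := hHdiff.analyticOnNhd hUopen
  obtain ⟨R, hR⟩ : ∃ R : ℝ, ∀ t : ℝ, R < |t| → g t = 0 := by
    obtain ⟨R, hR⟩ := hgsupp.isBounded.subset_closedBall 0
    refine ⟨R, fun t ht => ?_⟩
    apply image_eq_zero_of_notMem_tsupport
    intro hmem
    have := hR hmem
    simp only [Metric.mem_closedBall, Real.dist_eq, sub_zero] at this
    linarith
  have hfreq : ∃ᶠ z in nhdsWithin ((max R 0 + 1 : ℝ) : ℂ) {((max R 0 + 1 : ℝ) : ℂ)}ᶜ,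
      H z = 0 := by
    have htend : Filter.Tendsto (fun n : ℕ => ((max R 0 + 1 + 1/(n+1) : ℝ) : ℂ)) Filter.atTop
        (nhdsWithin ((max R 0 + 1 : ℝ) : ℂ) {((max R 0 + 1 : ℝ) : ℂ)}ᶜ) := by
      apply tendsto_nhdsWithin_of_tendsto_nhds_of_eventually_within
      · have h1 : Filter.Tendsto (fun n : ℕ => (max R 0 + 1 + 1/(n+1) : ℝ)) Filter.atTop
            (nhds (max R 0 + 1)) := by
          have h2 := tendsto_one_div_add_atTop_nhds_zero_nat (𝕜 := ℝ)
          simpa using tendsto_const_nhds.add h2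
        exact (Complex.continuous_ofReal.tendsto _).comp h1
      · refine Filter.Eventually.of_forall fun n => ?_
        simp only [mem_compl_iff, mem_singleton_iff, Complex.ofReal_inj]
        intro hcontr
        have h3 : (0:ℝ) < 1/(n+1) := by positivity
        linarith [hcontr]
    apply htend.frequently
    apply Filter.Frequently.of_forall
    intro n
    have h3 : (0:ℝ) < 1/(n+1) := by positivity
    have h4 : R ≤ max R 0 := le_max_left R 0
    have h5 : (0:ℝ) ≤ max R 0 := le_max_right R 0
    have hg0 : g (max R 0 + 1 + 1/(n+1)) = 0 := by
      apply hR
      rw [abs_of_pos (by linarith)]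
      linarith
    rw [hHreal (max R 0 + 1 + 1/(n+1)), hg0, mul_zero]
  have hz₀U : ((max R 0 + 1 : ℝ) : ℂ) ∈ U := by
    simp only [hUdef, mem_setOf_eq, Complex.ofReal_im, abs_zero]
    positivity
  have hH0 : EqOn H 0 U :=
    hHanalytic.eqOn_zero_of_preconnected_of_frequently_eq_zero hUconv.isPreconnected hz₀U hfreq
  funext t
  have htU : ((t : ℝ) : ℂ) ∈ U := by
    simp only [hUdef, mem_setOf_eq, Complex.ofReal_im, abs_zero]
    positivity
  have := hH0 htU
  rw [hHreal t] at this
  simp only [Pi.zero_apply, mul_eq_zero] at this ⊢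
  rcases this with h | h
  · exfalso
    have : (2 * Real.pi : ℝ) = 0 := by exact_mod_cast h
    have := Real.pi_pos; linarith
  · exact h
end

section
/- For all real E and d > 0, the limit as ε → 0⁺ of ∫_ℝ e^{-iEs} · d²/ds² [ln(μ√(4d² - (s - iε)²))] ds equals -2πE cos(2dE)·Θ(-E), where Θ is the Heaviside step function and μ > 0 is any constant. -/
open MeasureTheory Filter Set Complex FourierTransform

noncomputable section

-- integrability of t * exp(-r t) on Ioi 0, r>0
lemma integrableOn_t_exp {r : ℝ} (hr : 0 < r) :
    IntegrableOn (fun t : ℝ => t * Real.exp (-r * t)) (Ioi 0) := by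
  have h1 : IntegrableOn (fun t : ℝ => (2/r) * Real.exp (-(r/2) * t)) (Ioi 0) :=
    (exp_neg_integrableOn_Ioi 0 (by positivity)).const_mul _
  refine h1.mono' ?_ ?_
  · exact (continuous_id.mul (Real.continuous_exp.comp (continuous_const.mul continuous_id))).aestronglyMeasurable.restrict
  · filter_upwards [ae_restrict_mem measurableSet_Ioi] with t ht
    have ht0 : (0:ℝ) < t := ht
    have key : t ≤ (2/r) * Real.exp ((r/2) * t) := by
      have h2 : r/2*t ≤ Real.exp (r/2*t) := by linarith [Real.add_one_le_exp ((r/2)*t)]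
      calc t = 2/r * (r/2*t) := by field_simp
        _ ≤ 2/r * Real.exp (r/2*t) := by
            exact mul_le_mul_of_nonneg_left h2 (by positivity)
        _ = (2/r) * Real.exp ((r/2) * t) := by ring_nf
    have : t * Real.exp (-r*t) ≤ (2/r) * Real.exp ((r/2)*t) * Real.exp (-r*t) := by
      nlinarith [Real.exp_pos (-r*t)]
    rw [Real.norm_eq_abs, _root_.abs_of_nonneg (by positivity)]
    calc t * Real.exp (-r*t) ≤ (2/r) * Real.exp ((r/2)*t) * Real.exp (-r*t) := this
      _ = (2/r) * Real.exp (-(r/2)*t) := by rw [mul_assoc, ← Real.exp_add]; ring_nf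

lemma norm_t_cexp {γ : ℂ} (t : ℝ) (ht0 : 0 ≤ t) :
    ‖(t:ℂ) * Complex.exp (-γ * t)‖ = t * Real.exp (-γ.re * t) := by
  rw [norm_mul, Complex.norm_real, Complex.norm_exp, Real.norm_eq_abs,
    _root_.abs_of_nonneg ht0]
  congr 2
  simp [Complex.mul_re]

lemma integrableOn_t_cexp {γ : ℂ} (hγ : 0 < γ.re) :
    IntegrableOn (fun t : ℝ => (t:ℂ) * Complex.exp (-γ * t)) (Ioi 0) := by
  refine (integrableOn_t_exp hγ).mono' ?_ ?_
  · exact (Complex.continuous_ofReal.mul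
      (Complex.continuous_exp.comp (continuous_const.mul Complex.continuous_ofReal))).aestronglyMeasurable.restrict
  · filter_upwards [ae_restrict_mem measurableSet_Ioi] with t ht
    exact le_of_eq (norm_t_cexp t (le_of_lt ht))

lemma tendsto_t_exp {r : ℝ} (hr : 0 < r) :
    Tendsto (fun t : ℝ => t * Real.exp (-r * t)) atTop (nhds 0) := by
  have h := ((Real.tendsto_pow_mul_exp_neg_atTop_nhds_zero 1).comp
    (tendsto_id.const_mul_atTop hr)).const_mul (1/r)
  rw [mul_zero] at h
  refine h.congr (fun t => ?_)
  simp only [Function.comp, id]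
  field_simp

lemma integral_t_cexp {γ : ℂ} (hγ : 0 < γ.re) :
    ∫ t in Ioi (0:ℝ), (t:ℂ) * Complex.exp (-γ * t) = (γ^2)⁻¹ := by
  have hγ0 : γ ≠ 0 := fun h => by simp [h] at hγ
  have key := integral_Ioi_of_hasDerivAt_of_tendsto (f := fun t : ℝ =>
      -((t:ℂ)/γ + 1/γ^2) * Complex.exp (-γ * t)) (a := 0)
      (f' := fun t : ℝ => (t:ℂ) * Complex.exp (-γ * t)) (m := 0)
      ?_ ?_ (integrableOn_t_cexp hγ) ?_
  · rw [key]; simp [one_div]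
  · exact ((Complex.continuous_ofReal.div_const _ |>.add continuous_const).neg.mul
      (Complex.continuous_exp.comp (continuous_const.mul Complex.continuous_ofReal))).continuousWithinAt
  · intro x hx
    have h1 : HasDerivAt (fun t : ℝ => -((t:ℂ)/γ + 1/γ^2)) (-(1/γ)) x := by
      have h0 : HasDerivAt (fun t : ℝ => (t:ℂ)) 1 x := by
        exact Complex.ofRealCLM.hasDerivAt (x := x)
      have h := ((h0.div_const γ).add_const (1/γ^2)).neg
      exact h
    have h2 : HasDerivAt (fun t : ℝ => Complex.exp (-γ * t)) (-γ * Complex.exp (-γ * x)) x := by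
      have hc : HasDerivAt (fun t : ℝ => -γ * (t:ℂ)) (-γ) x := by
        have h0 : HasDerivAt (fun t : ℝ => (t:ℂ)) 1 x := by
          exact Complex.ofRealCLM.hasDerivAt (x := x)
        simpa using h0.const_mul (-γ)
      have := (Complex.hasDerivAt_exp (-γ * x)).comp x hc
      simp [mul_comm] at this ⊢
      exact this
    have := h1.mul h2
    refine this.congr_deriv ?_
    field_simp
    ring
  · rw [tendsto_zero_iff_norm_tendsto_zero]
    have hb : Tendsto (fun t : ℝ => (1/‖γ‖) * (t * Real.exp (-γ.re * t))
        + (1/‖γ‖^2) * Real.exp (-γ.re * t)) atTop (nhds 0) := by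
      have h1 := (tendsto_t_exp hγ).const_mul (1/‖γ‖)
      have h2 : Tendsto (fun t : ℝ => (1/‖γ‖^2) * Real.exp (-γ.re * t)) atTop (nhds 0) := by
        have := (Real.tendsto_exp_atBot.comp (tendsto_id.const_mul_atTop_of_neg (neg_neg_iff_pos.mpr hγ))).const_mul (1/‖γ‖^2)
        simpa using this
      simpa using h1.add h2
    refine squeeze_zero' ?_ ?_ hb
    · filter_upwards with t using norm_nonneg _
    · filter_upwards [eventually_ge_atTop (0:ℝ)] with t ht0
      rw [norm_mul]
      have hexp : ‖Complex.exp (-γ * t)‖ = Real.exp (-γ.re * t) := by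
        rw [Complex.norm_exp]; congr 1; simp [Complex.mul_re]
      rw [hexp]
      have habs : ‖-((t:ℂ)/γ + 1/γ^2)‖ ≤ 1/‖γ‖ * t + 1/‖γ‖^2 := by
        rw [norm_neg]
        refine (norm_add_le _ _).trans ?_
        simp [norm_div, Complex.norm_real, _root_.abs_of_nonneg ht0]
        ring_nf
        simp [le_refl]
      calc ‖-((t:ℂ)/γ + 1/γ^2)‖ * Real.exp (-γ.re * t)
          ≤ (1/‖γ‖ * t + 1/‖γ‖^2) * Real.exp (-γ.re * t) := by
            exact mul_le_mul_of_nonneg_right habs (Real.exp_nonneg _)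
        _ = 1/‖γ‖ * (t * Real.exp (-γ.re * t)) + 1/‖γ‖^2 * Real.exp (-γ.re * t) := by ring

lemma integrable_shifted_inv {a b : ℝ} (hb : b ≠ 0) :
    Integrable (fun s : ℝ => ((s - a)^2 + b^2)⁻¹) := by
  have h1 : Integrable (fun s : ℝ => (1 + (s/b)^2)⁻¹) := integrable_inv_one_add_sq.comp_div hb
  have h2 : Integrable (fun s : ℝ => (1 + ((s-a)/b)^2)⁻¹) := by
    have := h1.comp_sub_right a
    simpa using this
  have h3 := h2.const_mul ((b^2)⁻¹)
  refine h3.congr ?_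
  filter_upwards with s
  have hb2 : (b:ℝ)^2 ≠ 0 := pow_ne_zero _ hb
  field_simp
  ring

lemma integrable_ker {c : ℂ} (hc : c.im ≠ 0) (E : ℝ) :
    Integrable (fun s : ℝ => Complex.exp (-Complex.I*E*s) * (((s:ℂ) - c)^2)⁻¹) := by
  refine (integrable_shifted_inv (a := c.re) hc).mono' ?_ ?_
  · apply Continuous.aestronglyMeasurable
    refine (Complex.continuous_exp.comp (by continuity)).mul (Continuous.inv₀ (by continuity) ?_)
    intro s
    refine pow_ne_zero _ (fun h => hc ?_)
    have := congrArg Complex.im h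
    simpa using this.symm
  · filter_upwards with s
    rw [norm_mul]
    have h1 : ‖Complex.exp (-Complex.I*E*s)‖ = 1 := by
      rw [Complex.norm_exp]
      norm_num [Complex.mul_re]
    rw [h1, one_mul, norm_inv, norm_pow, ← Complex.normSq_eq_norm_sq]
    have : Complex.normSq ((s:ℂ) - c) = (s - c.re)^2 + c.im^2 := by
      simp [Complex.normSq_apply, Complex.sub_re, Complex.sub_im]
      ring
    rw [this]

noncomputable def Gfun (c : ℂ) : ℝ → ℂ :=
  fun u => if 0 < u then ((-4*Real.pi^2 : ℝ) : ℂ) * u * Complex.exp (2*Real.pi*Complex.I*c*u) else 0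

lemma continuous_Gfun (c : ℂ) : Continuous (Gfun c) := by
  unfold Gfun
  rw [continuous_iff_continuousAt]
  intro x
  set F : ℝ → ℂ := fun u => ((-4*Real.pi^2 : ℝ) : ℂ) * u * Complex.exp (2*Real.pi*Complex.I*c*u) with hF
  have hcont : Continuous F := by fun_prop
  rcases lt_trichotomy x 0 with hx | rfl | hx
  · refine ContinuousAt.congr (f := fun _ : ℝ => (0:ℂ)) continuousAt_const ?_
    filter_upwards [eventually_lt_nhds hx] with y hy
    simp [not_lt.mpr hy.le]
  · rw [ContinuousAt]
    simp only [lt_irrefl, if_false]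
    refine squeeze_zero_norm (a := fun u => ‖F u‖) (fun u => ?_) ?_
    · by_cases hu : 0 < u
      · simp only [hu, if_true]; exact le_rfl
      · simp [hu]
    · have := (hcont.norm.tendsto 0)
      simpa [hF] using this
  · refine ContinuousAt.congr (f := F) hcont.continuousAt ?_
    filter_upwards [eventually_gt_nhds hx] with y hy
    simp only [hy, if_true, hF]

lemma Gfun_eq_indicator (c : ℂ) : Gfun c = Set.indicator (Ioi (0:ℝ))
    (fun u : ℝ => ((-4*Real.pi^2 : ℝ) : ℂ) * u * Complex.exp (2*Real.pi*Complex.I*c*u)) := by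
  funext u
  by_cases hu : 0 < u <;> simp [Gfun, hu, Set.indicator, mem_Ioi]

lemma gamma_re_pos {c : ℂ} (hc : 0 < c.im) : 0 < (-(2*Real.pi*Complex.I*c)).re := by
  simp [Complex.mul_re, Complex.mul_im, Complex.I_re, Complex.I_im]
  positivity

lemma integrable_Gfun {c : ℂ} (hc : 0 < c.im) : Integrable (Gfun c) := by
  rw [Gfun_eq_indicator]
  rw [integrable_indicator_iff measurableSet_Ioi]
  have h := (integrableOn_t_cexp (gamma_re_pos hc)).const_mul (((-4*Real.pi^2 : ℝ) : ℂ))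
  refine h.congr ?_
  filter_upwards with u
  rw [neg_neg]
  ring

lemma fourier_Gfun {c : ℂ} (hc : 0 < c.im) (ξ : ℝ) :
    𝓕 (Gfun c) ξ = (((ξ:ℂ) - c)^2)⁻¹ := by
  rw [Real.fourier_real_eq_integral_exp_smul]
  have step1 : ∀ v : ℝ, Complex.exp (↑(-2 * Real.pi * v * ξ) * Complex.I) • Gfun c v
      = Set.indicator (Ioi (0:ℝ)) (fun v : ℝ => ((-4*Real.pi^2 : ℝ) : ℂ) *
          ((v:ℂ) * Complex.exp (-(2*Real.pi*Complex.I*((ξ:ℂ) - c)) * v))) v := by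
    intro v
    by_cases hv : 0 < v
    · simp only [Gfun, hv, if_true, Set.indicator_of_mem (mem_Ioi.mpr hv), smul_eq_mul]
      calc Complex.exp (↑(-2 * Real.pi * v * ξ) * Complex.I) * (((-4*Real.pi^2 : ℝ) : ℂ) * v * Complex.exp (2*Real.pi*Complex.I*c*v))
          = ((-4*Real.pi^2 : ℝ) : ℂ) * ((v:ℂ) * (Complex.exp (↑(-2 * Real.pi * v * ξ) * Complex.I) * Complex.exp (2*Real.pi*Complex.I*c*v))) := by ring
        _ = ((-4*Real.pi^2 : ℝ) : ℂ) * ((v:ℂ) * Complex.exp (-(2*Real.pi*Complex.I*((ξ:ℂ) - c)) * v)) := by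
            rw [← Complex.exp_add]
            congr 2
            push_cast
            ring
    · simp [Gfun, hv, Set.indicator_of_notMem (fun h => hv (mem_Ioi.mp h))]
  rw [integral_congr_ae (Eventually.of_forall step1), integral_indicator measurableSet_Ioi]
  have hγ : 0 < (2*Real.pi*Complex.I*((ξ:ℂ) - c)).re := by
    have : (2*Real.pi*Complex.I*((ξ:ℂ) - c)) = -(-(2*Real.pi*Complex.I*((ξ:ℂ)-c))) := by ring
    simp [Complex.mul_re, Complex.mul_im, Complex.I_re, Complex.I_im, Complex.sub_im]
    positivity
  rw [MeasureTheory.integral_const_mul, integral_t_cexp hγ]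
  have hne : ((ξ:ℂ) - c) ≠ 0 := by
    intro h
    have := congrArg Complex.im h
    simp [Complex.sub_im] at this
    exact absurd this.symm (ne_of_lt hc)
  have hpi : (Real.pi : ℂ) ≠ 0 := Complex.ofReal_ne_zero.mpr Real.pi_ne_zero
  push_cast
  field_simp
  ring_nf
  simp [Complex.I_sq]

lemma integrable_g {c : ℂ} (hc : 0 < c.im) :
    Integrable (fun s : ℝ => (((s:ℂ) - c)^2)⁻¹) := by
  have := integrable_ker (c := c) (ne_of_gt hc) 0
  refine this.congr ?_
  filter_upwards with s
  simp

lemma key_integral {c : ℂ} (hc : 0 < c.im) (E : ℝ) :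
    ∫ s : ℝ, Complex.exp (-Complex.I*E*s) * (((s:ℂ) - c)^2)⁻¹
    = if E < 0 then 2*Real.pi*E * Complex.exp (-Complex.I*E*c) else 0 := by
  have h𝓕 : 𝓕 (Gfun c) = fun s : ℝ => (((s:ℂ) - c)^2)⁻¹ := funext (fourier_Gfun hc)
  have hinv : 𝓕⁻ (fun s : ℝ => (((s:ℂ) - c)^2)⁻¹) = Gfun c := by
    rw [← h𝓕]
    exact (continuous_Gfun c).fourierInv_fourier_eq (integrable_Gfun hc) (h𝓕 ▸ integrable_g hc)
  have heval := congrFun hinv (-E / (2*Real.pi))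
  rw [Real.fourierInv_eq'] at heval
  have hπ : Real.pi ≠ 0 := Real.pi_ne_zero
  have hπc : (Real.pi : ℂ) ≠ 0 := Complex.ofReal_ne_zero.mpr Real.pi_ne_zero
  have hlhs : (∫ v : ℝ, Complex.exp (↑(2 * Real.pi * (inner ℝ v (-E / (2*Real.pi)) : ℝ)) * Complex.I)
        • (fun s : ℝ => (((s:ℂ) - c)^2)⁻¹) v)
      = ∫ s : ℝ, Complex.exp (-Complex.I*E*s) * (((s:ℂ) - c)^2)⁻¹ := by
    refine integral_congr_ae (Eventually.of_forall (fun v => ?_))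
    simp only [smul_eq_mul, RCLike.inner_apply, conj_trivial]
    congr 2
    rw [show 2 * Real.pi * (-E / (2*Real.pi) * v) = -(E*v) by field_simp]
    push_cast
    ring
  rw [hlhs] at heval
  rw [heval]
  unfold Gfun
  have hiff : (0 < -E / (2*Real.pi)) ↔ E < 0 := by
    rw [div_pos_iff]
    constructor
    · rintro (⟨h1, _⟩ | ⟨_, h2⟩)
      · linarith
      · linarith [Real.pi_pos]
    · intro h
      exact Or.inl ⟨by linarith, by positivity⟩
  by_cases hE : E < 0
  · simp only [hiff.mpr hE |> fun h => h, if_pos (hiff.mpr hE), if_pos hE]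
    have : (2:ℂ)*Real.pi*Complex.I*c*(↑(-E / (2*Real.pi))) = -Complex.I*E*c := by
      push_cast
      field_simp [hπc]
    rw [this]
    push_cast
    field_simp [hπc]
    ring
  · rw [if_neg (fun h => hE (hiff.mp h)), if_neg hE]

lemma slit_w {d ε : ℝ} (hd : 0 < d) {z : ℂ} (hz : z.im < ε) :
    (4*(d:ℂ)^2 - (z - Complex.I*ε)^2) ∈ Complex.slitPlane := by
  set u : ℂ := z - Complex.I*ε with hu
  have him : u.im < 0 := by
    simp only [hu, Complex.sub_im, Complex.mul_im, Complex.I_re, Complex.I_im,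
      Complex.ofReal_re, Complex.ofReal_im]
    simpa using by linarith
  have hre_w : (4*(d:ℂ)^2 - u^2).re = 4*d^2 - u.re^2 + u.im^2 := by
    simp [Complex.sub_re, Complex.mul_re, Complex.mul_im, pow_two]
    ring
  have him_w : (4*(d:ℂ)^2 - u^2).im = -(2*u.re*u.im) := by
    simp [Complex.sub_im, Complex.mul_im, Complex.mul_re, pow_two]
    ring
  rw [Complex.mem_slitPlane_iff]
  by_cases hre : u.re = 0
  · left; rw [hre_w, hre]; nlinarith
  · right; rw [him_w]
    intro h
    rcases mul_eq_zero.mp (by linarith [neg_eq_zero.mp h] : 2*u.re*u.im = 0) with h' | h'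
    · rcases mul_eq_zero.mp h' with h'' | h''
      · norm_num at h''
      · exact hre h''
    · exact absurd h' (ne_of_lt him)

lemma re_cpow_half_pos {w : ℂ} (hw : w ∈ Complex.slitPlane) : 0 < (w ^ ((1:ℂ)/2)).re := by
  have hw0 : w ≠ 0 := Complex.slitPlane_ne_zero hw
  rw [Complex.cpow_def_of_ne_zero hw0, Complex.exp_re]
  have him : (Complex.log w * (1/2)).im = Complex.arg w / 2 := by
    simp [Complex.mul_im, Complex.log_im]
    ring
  rw [him]
  have harg1 : -Real.pi < Complex.arg w := Complex.neg_pi_lt_arg w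
  have harg2 : Complex.arg w < Real.pi := by
    refine lt_of_le_of_ne (Complex.arg_le_pi w) ?_
    intro h
    rcases Complex.arg_eq_pi_iff.mp h with ⟨h1, h2⟩
    rw [Complex.mem_slitPlane_iff] at hw
    rcases hw with h3 | h3
    · linarith
    · exact h3 h2
  have : 0 < Real.cos (Complex.arg w / 2) :=
    Real.cos_pos_of_mem_Ioo ⟨by linarith, by linarith⟩
  positivity

lemma hasDerivAt_f {d μ ε : ℝ} (hd : 0 < d) (hμ : 0 < μ) {z : ℂ} (hz : z.im < ε) :
    HasDerivAt (fun z : ℂ => Complex.log ((μ:ℂ) * (4*(d:ℂ)^2 - (z - Complex.I*ε)^2) ^ ((1:ℂ)/2)))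
      (-(z - Complex.I*ε) / (4*(d:ℂ)^2 - (z - Complex.I*ε)^2)) z := by
  set u : ℂ := z - Complex.I*ε with hu
  set w : ℂ := 4*(d:ℂ)^2 - u^2 with hwdef
  have hslit : w ∈ Complex.slitPlane := slit_w hd hz
  have hw0 : w ≠ 0 := Complex.slitPlane_ne_zero hslit
  have hsq0 : w ^ ((1:ℂ)/2) ≠ 0 := by
    rw [Ne, Complex.cpow_eq_zero_iff]
    push_neg
    intro h; exact absurd h hw0
  have hmuslit : (μ:ℂ) * w ^ ((1:ℂ)/2) ∈ Complex.slitPlane := by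
    rw [Complex.mem_slitPlane_iff]
    left
    have := re_cpow_half_pos hslit
    simp only [Complex.mul_re, Complex.ofReal_re, Complex.ofReal_im, zero_mul, sub_zero]
    positivity
  have h2 : HasDerivAt (fun z : ℂ => 4*(d:ℂ)^2 - (z - Complex.I*ε)^2) (-(2*u)) z := by
    have hb : HasDerivAt (fun z : ℂ => (z - Complex.I*ε)^2) (2*(z - Complex.I*ε)^1*1) z :=
      ((hasDerivAt_id z).sub_const (Complex.I*ε)).pow 2
    have := hb.const_sub (4*(d:ℂ)^2)
    simpa [hu] using this
  have h4 := h2.cpow_const (c := (1:ℂ)/2) (by rwa [← hwdef])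
  have h5 := h4.const_mul (μ:ℂ)
  have h6 := h5.clog (by rwa [← hwdef])
  rw [show (fun z : ℂ => Complex.log ((μ:ℂ) * (4*(d:ℂ)^2 - (z - Complex.I*ε)^2) ^ ((1:ℂ)/2)))
    = fun z : ℂ => Complex.log ((μ:ℂ) * ((fun z : ℂ => 4*(d:ℂ)^2 - (z - Complex.I*ε)^2) z) ^ ((1:ℂ)/2)) from rfl]
  convert h6 using 1
  rw [← hwdef]
  have hsub : w ^ ((1:ℂ)/2 - 1) = w ^ ((1:ℂ)/2) / w := by
    rw [Complex.cpow_sub _ _ hw0, Complex.cpow_one]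
  rw [hsub]
  have hμ0 : (μ:ℂ) ≠ 0 := Complex.ofReal_ne_zero.mpr hμ.ne'
  field_simp

lemma hasDerivAt_g {d ε : ℝ} (hd : 0 < d) {z : ℂ} (hz : z.im < ε) :
    HasDerivAt (fun z : ℂ => -(z - Complex.I*ε) / (4*(d:ℂ)^2 - (z - Complex.I*ε)^2))
      ((-(4*(d:ℂ)^2 - (z - Complex.I*ε)^2) - 2*(z - Complex.I*ε)^2)
        / (4*(d:ℂ)^2 - (z - Complex.I*ε)^2)^2) z := by
  have hw0 : (4*(d:ℂ)^2 - (z - Complex.I*ε)^2) ≠ 0 :=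
    Complex.slitPlane_ne_zero (slit_w hd hz)
  have ha : HasDerivAt (fun z : ℂ => -(z - Complex.I*ε)) (-1) z := by
    exact ((hasDerivAt_id z).sub_const (Complex.I*ε)).neg
  have hb : HasDerivAt (fun z : ℂ => 4*(d:ℂ)^2 - (z - Complex.I*ε)^2) (-(2*(z - Complex.I*ε))) z := by
    have h := (((hasDerivAt_id z).sub_const (Complex.I*ε)).pow 2).const_sub (4*(d:ℂ)^2)
    simpa using h
  have := ha.div hb hw0
  refine this.congr_deriv ?_
  field_simp

lemma deriv_deriv_f (d μ ε : ℝ) (hd : 0 < d) (hμ : 0 < μ) (hε : 0 < ε) (s : ℝ) :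
    deriv (deriv (fun z : ℂ => Complex.log ((μ:ℂ) * (4*(d:ℂ)^2 - (z - Complex.I*ε)^2) ^ ((1:ℂ)/2)))) (s:ℂ)
    = -(1/2) * ((((s:ℂ) - (2*d + Complex.I*ε))^2)⁻¹ + (((s:ℂ) - (-2*d + Complex.I*ε))^2)⁻¹) := by
  have hU : IsOpen {z : ℂ | z.im < ε} := isOpen_lt Complex.continuous_im continuous_const
  have hs : (s:ℂ) ∈ {z : ℂ | z.im < ε} := by simp [Complex.ofReal_im, hε]
  have heq : deriv (fun z : ℂ => Complex.log ((μ:ℂ) * (4*(d:ℂ)^2 - (z - Complex.I*ε)^2) ^ ((1:ℂ)/2)))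
      =ᶠ[nhds (s:ℂ)] (fun z : ℂ => -(z - Complex.I*ε) / (4*(d:ℂ)^2 - (z - Complex.I*ε)^2)) := by
    filter_upwards [hU.mem_nhds hs] with z hz
    exact (hasDerivAt_f hd hμ hz).deriv
  rw [heq.deriv_eq, (hasDerivAt_g hd hs).deriv]
  -- algebraic identity
  set u : ℂ := (s:ℂ) - Complex.I*ε with hu
  have him : u.im = -ε := by
    simp [hu, Complex.sub_im, Complex.mul_im]
  have h1 : (s:ℂ) - (2*d + Complex.I*ε) = u - 2*d := by rw [hu]; ring
  have h2 : (s:ℂ) - (-2*d + Complex.I*ε) = u + 2*d := by rw [hu]; ring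
  rw [h1, h2]
  have hne1 : u - 2*d ≠ 0 := by
    intro h
    have := congrArg Complex.im h
    simp [Complex.sub_im, him] at this
    linarith
  have hne2 : u + 2*d ≠ 0 := by
    intro h
    have := congrArg Complex.im h
    simp [Complex.add_im, him] at this
    linarith
  have hw0 : (4*(d:ℂ)^2 - u^2) ≠ 0 := by
    intro h
    have : (2*d - u) * (2*d + u) = 0 := by rw [← h]; ring
    rcases mul_eq_zero.mp this with h' | h'
    · exact hne1 (by linear_combination -h')
    · exact hne2 (by linear_combination h')
  have hne1' : u - (d:ℂ)*2 ≠ 0 := by rw [mul_comm]; exact hne1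
  have hne2' : u + (d:ℂ)*2 ≠ 0 := by rw [mul_comm]; exact hne2
  field_simp
  ring

/-- For all real `E` and `d > 0`, `μ > 0`,
`lim_{ε→0⁺} ∫ e^{-iEs} d²/ds² [log(μ √(4d² - (s - iε)²))] ds
  = -2πE cos(2dE) Θ(-E)`, where `Θ` is the Heaviside step function
(`Θ(x) = 1` for `x > 0`, `0` for `x ≤ 0`). -/
theorem stmt_15 (E d μ : ℝ) (hd : 0 < d) (hμ : 0 < μ) :
    Tendsto (fun ε : ℝ =>
        ∫ s : ℝ, Complex.exp (-Complex.I * E * s) *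
          deriv (deriv (fun z : ℂ =>
            Complex.log (μ * (4 * (d : ℂ) ^ 2 - (z - Complex.I * ε) ^ 2)
              ^ ((1 : ℂ) / 2)))) (s : ℂ))
      (nhdsWithin 0 (Set.Ioi 0))
      (nhds (((-2 * Real.pi * E * Real.cos (2 * d * E) *
          (if 0 < -E then 1 else 0)) : ℝ) : ℂ)) := by
  set φ : ℝ → ℂ := fun ε =>
    -(1/2) * ((if E < 0 then 2*Real.pi*E * Complex.exp (-Complex.I*E*(2*d + Complex.I*ε)) else 0)
      + (if E < 0 then 2*Real.pi*E * Complex.exp (-Complex.I*E*(-2*d + Complex.I*ε)) else 0)) with hφ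
  have main : ∀ ε ∈ Set.Ioi (0:ℝ),
      (∫ s : ℝ, Complex.exp (-Complex.I * E * s) *
        deriv (deriv (fun z : ℂ =>
          Complex.log (μ * (4 * (d : ℂ) ^ 2 - (z - Complex.I * ε) ^ 2)
            ^ ((1 : ℂ) / 2)))) (s : ℂ)) = φ ε := by
    intro ε hε
    rw [mem_Ioi] at hε
    have hc1 : ((2*(d:ℝ) : ℝ) : ℂ) + Complex.I*ε = 2*(d:ℂ) + Complex.I*ε := by push_cast; ring
    have hc1im : (2*(d:ℂ) + Complex.I*(ε:ℂ)).im = ε := by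
      simp [Complex.add_im, Complex.mul_im]
    have hc2im : (-2*(d:ℂ) + Complex.I*(ε:ℂ)).im = ε := by
      simp [Complex.add_im, Complex.mul_im]
    have step1 : (∫ s : ℝ, Complex.exp (-Complex.I * E * s) *
        deriv (deriv (fun z : ℂ =>
          Complex.log (μ * (4 * (d : ℂ) ^ 2 - (z - Complex.I * ε) ^ 2)
            ^ ((1 : ℂ) / 2)))) (s : ℂ))
        = ∫ s : ℝ, (-(1/2) : ℂ) * (Complex.exp (-Complex.I*E*s) * (((s:ℂ) - (2*d + Complex.I*ε))^2)⁻¹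
            + Complex.exp (-Complex.I*E*s) * (((s:ℂ) - (-2*d + Complex.I*ε))^2)⁻¹) := by
      refine integral_congr_ae (Eventually.of_forall (fun s => ?_))
      dsimp only
      rw [deriv_deriv_f d μ ε hd hμ hε s]
      ring
    rw [step1, MeasureTheory.integral_const_mul,
      integral_add (integrable_ker (by rw [hc1im]; exact hε.ne') E)
        (integrable_ker (by rw [hc2im]; exact hε.ne') E),
      key_integral (by rw [hc1im]; exact hε) E, key_integral (by rw [hc2im]; exact hε) E]
  refine Tendsto.congr' (f₁ := φ) ?_ ?_
  · exact (eventually_mem_nhdsWithin.mono (fun ε hε => (main ε hε).symm))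
  · -- Tendsto φ (𝓝[>] 0) (𝓝 L)
    have hcont : Tendsto φ (nhds 0) (nhds (φ 0)) := by
      apply Continuous.tendsto
      rw [hφ]
      by_cases hE : E < 0 <;> simp only [if_pos, if_neg, hE, if_true, if_false] <;> fun_prop
    have hval : φ 0 = (((-2 * Real.pi * E * Real.cos (2 * d * E) *
        (if 0 < -E then 1 else 0)) : ℝ) : ℂ) := by
      rw [hφ]
      by_cases hE : E < 0
      · simp only [if_pos hE, Complex.ofReal_zero, mul_zero, add_zero]
        have he1 : -Complex.I*E*(2*(d:ℂ)) = (-(2*d*E) : ℝ) * Complex.I := by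
          push_cast; ring
        have he2 : -Complex.I*E*(-2*(d:ℂ)) = ((2*d*E : ℝ)) * Complex.I := by
          push_cast; ring
        rw [he1, he2, Complex.exp_mul_I, Complex.exp_mul_I]
        have h0E : (0:ℝ) < -E := by linarith
        rw [if_pos h0E]
        push_cast
        simp only [Complex.cos_neg, Complex.sin_neg]
        ring
      · have h0E : ¬ (0:ℝ) < -E := by linarith
        simp [if_neg hE, if_neg h0E]
    rw [← hval]
    exact hcont.mono_left nhdsWithin_le_nhds

end
end
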